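/- arXiv:1906.00264 — 6 statements merged into one kernel-verified Lean document; each statement's English description precedes it below -/
import Mathlib

section
/- Let k ≥ 1 and let f(q) = a₀ + a₁·q + q²·p(q), where a₀, a₁ ∈ ℝ and p is a real polynomial of degree at most k − 2. Then there exists q₀ ∈ {0, 1/k, 2/k, …, 1} such that |f(q₀)| ≥ |a₁| / 2^{3k²}. -/
open scoped BigOperators

namespace GraphDisc

/-- A `k`-distinguisher is symmetric: invariant under all permutations of arguments. -/
def IsSymmetric {V : Type*} {k : ℕ} (g : (Fin k → V) → Bool) : Prop :=
  ∀ (σ : Equiv.Perm (Fin k)) (w : Fin k → V), g (w ∘ σ) = g w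

/-- A `k`-distinguishing class: a family of symmetric Boolean `k`-ary functions. -/
def IsDistinguishingClass {V : Type*} {k : ℕ} (G : Set ((Fin k → V) → Bool)) : Prop :=
  ∀ g ∈ G, IsSymmetric g

/-- `p` is a probability distribution on `V` (as a mass function). -/
def IsDist {V : Type*} (p : V → ℝ) : Prop := (∀ v, 0 ≤ p v) ∧ HasSum p 1

/-- `L_P(g)`: expected value of `g` on a `k`-tuple of i.i.d. samples from `p`. -/
noncomputable def LP {V : Type*} {k : ℕ} (p : V → ℝ) (g : (Fin k → V) → Bool) : ℝ :=
  ∑' w : Fin k → V, (∏ i, p (w i)) * (if g w then 1 else 0)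

/-- `L_S(g)`: empirical frequency of `g` on all `k`-tuples from the sample `S`. -/
noncomputable def LS {V : Type*} {k m : ℕ} (S : Fin m → V) (g : (Fin k → V) → Bool) : ℝ :=
  (∑ t : Fin k → Fin m, if g (S ∘ t) then (1 : ℝ) else 0) / (m : ℝ) ^ k

/-- Probability of an event `E` under an i.i.d. sample of size `m` from `p`. -/
noncomputable def Prob {V : Type*} (p : V → ℝ) {m : ℕ} (E : Set (Fin m → V)) : ℝ :=
  ∑' S : Fin m → V, E.indicator (fun S => ∏ i, p (S i)) S

/-- Probability of an event `E` under two independent i.i.d. samples of size `m`. -/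
noncomputable def Prob2 {V : Type*} (p₁ p₂ : V → ℝ) {m : ℕ}
    (E : Set ((Fin m → V) × (Fin m → V))) : ℝ :=
  ∑' S : (Fin m → V) × (Fin m → V),
    E.indicator (fun S => (∏ i, p₁ (S.1 i)) * ∏ i, p₂ (S.2 i)) S

/-- IPM distance induced by a class of `k`-ary distinguishers. -/
noncomputable def IPM {V : Type*} {k : ℕ} (G : Set ((Fin k → V) → Bool))
    (p₁ p₂ : V → ℝ) : ℝ :=
  ⨆ g ∈ G, |LP p₁ g - LP p₂ g|

/-- `L_P(d)` for a unary Boolean function `d`. -/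
noncomputable def LP1 {V : Type*} (p : V → ℝ) (d : V → Bool) : ℝ :=
  ∑' v : V, p v * (if d v then 1 else 0)

/-- IPM distance for a family of unary Boolean functions. -/
noncomputable def IPM1 {V : Type*} (D : Set (V → Bool)) (p₁ p₂ : V → ℝ) : ℝ :=
  ⨆ d ∈ D, |LP1 p₁ d - LP1 p₂ d|

/-- `L_P(g)` for a binary (curried) Boolean function `g`. -/
noncomputable def LP2 {V : Type*} (p : V → ℝ) (g : V → V → Bool) : ℝ :=
  ∑' w : V × V, (p w.1 * p w.2) * (if g w.1 w.2 then 1 else 0)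

/-- `D` shatters the finite set `T`: every Boolean pattern on `T` is realized in `D`. -/
def Shatters {X : Type*} (D : Set (X → Bool)) (T : Finset X) : Prop :=
  ∀ f : X → Bool, ∃ d ∈ D, ∀ x ∈ T, d x = f x

/-- The VC dimension of a family of Boolean functions. -/
noncomputable def vcDim {X : Type*} (D : Set (X → Bool)) : ℕ∞ :=
  ⨆ T ∈ {T : Finset X | Shatters D T}, (T.card : ℕ∞)

/-- Fixing the first argument of a `(k+1)`-ary function to `v`. -/
def proj {V : Type*} {k : ℕ} (v : V) (g : (Fin (k + 1) → V) → Bool) :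
    (Fin k → V) → Bool := fun u => g (Fin.cons v u)

/-- The graph VC dimension, defined inductively: for `k = 1` it is the usual VC
dimension; for `k > 1` it is the supremum over `v` of the graph VC dimension of the
projected class `G_v`. -/
noncomputable def gvcDim {V : Type*} : (k : ℕ) → Set ((Fin k → V) → Bool) → ℕ∞
  | 0, G => vcDim G
  | 1, G => vcDim G
  | (k + 2), G => ⨆ v : V, gvcDim (k + 1) (proj v '' G)

open Classical in
/-- Mixture `q·δ_v + (1−q)·p`. -/
noncomputable def mix {V : Type*} (q : ℝ) (v : V) (p : V → ℝ) : V → ℝ :=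
  fun u => q * (if u = v then 1 else 0) + (1 - q) * p u

/-- The class of majority-vote threshold functions over `m`-tuples from `D`. -/
noncomputable def thresholdClass {V : Type*} (D : Set (V → Bool)) (m : ℕ) :
    Set (V → Bool) :=
  {h | ∃ d : Fin m → (V → Bool), (∀ i, d i ∈ D) ∧
        h = fun v => decide ((0 : ℝ) ≤ ∑ i, (2 * (if d i v then (1 : ℝ) else 0) - 1))}

/-! Lagrange interpolation at the `k + 1` nodes `j / k` writes the linear coefficient of `f` as
`∑ⱼ f(j/k) · [X¹] Lⱼ`. Each basis polynomial `Lⱼ` is its nodal weight `∏_{i ≠ j} (j/k - i/k)⁻¹`,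
at most `k ^ k` in size because the nodes are `1/k` apart, times a monic product of `k` linear
factors with roots in `[0, 1]`, whose coefficients are at most `2 ^ k`. Hence
`|a₁| ≤ (k + 1) (2k) ^ k max_j |f(j/k)| ≤ 2 ^ (3k²) max_j |f(j/k)|`. -/

open Polynomial Finset Lagrange

theorem abs_coeff_nodal_le {ι : Type*} (s : Finset ι) (v : ι → ℝ) (m : ℕ) :
    |(nodal s v).coeff m| ≤ ∏ i ∈ s, (1 + |v i|) := by
  induction s using Finset.cons_induction generalizing m with
  | empty => rw [nodal_empty, coeff_one]; split_ifs <;> simp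
  | cons a s ha ih =>
    have hX : |(X * nodal s v).coeff m| ≤ ∏ i ∈ s, (1 + |v i|) := by
      cases m with
      | zero => simpa using prod_nonneg fun i _ => by positivity
      | succ n => rw [coeff_X_mul]; exact ih n
    rw [nodal_eq, prod_cons, ← nodal_eq, sub_mul, coeff_sub, coeff_C_mul]
    calc |(X * nodal s v).coeff m - v a * (nodal s v).coeff m|
        ≤ |(X * nodal s v).coeff m| + |v a| * |(nodal s v).coeff m| := by
          rw [← abs_mul]; exact abs_sub _ _
      _ ≤ ∏ i ∈ s, (1 + |v i|) + |v a| * ∏ i ∈ s, (1 + |v i|) := by gcongr; exact ih m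
      _ = ∏ i ∈ cons a s ha, (1 + |v i|) := by rw [prod_cons]; ring

theorem basis_eq_C_nodalWeight_mul_nodal_erase {ι : Type*} [DecidableEq ι] (s : Finset ι)
    (v : ι → ℝ) (i : ι) : Lagrange.basis s v i = C (nodalWeight s v i) * nodal (s.erase i) v := by
  simp_rw [Lagrange.basis, basisDivisor, nodalWeight, prod_mul_distrib, map_prod, nodal]

section Separated

variable {ι : Type*} [DecidableEq ι] {s : Finset ι} {v : ι → ℝ} {δ : ℝ}

theorem abs_nodalWeight_le (hδ : 0 < δ) (hsep : ∀ i ∈ s, ∀ j ∈ s, i ≠ j → δ ≤ |v i - v j|)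
    {i : ι} (hi : i ∈ s) : |nodalWeight s v i| ≤ δ⁻¹ ^ (#s - 1) := by
  rw [nodalWeight, abs_prod, ← card_erase_of_mem hi, ← prod_const]
  refine prod_le_prod (fun _ _ => abs_nonneg _) fun j hj => ?_
  rw [abs_inv]
  exact inv_anti₀ hδ (hsep i hi j (mem_of_mem_erase hj) (ne_of_mem_erase hj).symm)

theorem abs_coeff_basis_le (hδ : 0 < δ) (hsep : ∀ i ∈ s, ∀ j ∈ s, i ≠ j → δ ≤ |v i - v j|)
    (hv : ∀ i ∈ s, |v i| ≤ 1) {i : ι} (hi : i ∈ s) (m : ℕ) :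
    |(Lagrange.basis s v i).coeff m| ≤ (2 / δ) ^ (#s - 1) := by
  have hnodal : |(nodal (s.erase i) v).coeff m| ≤ 2 ^ (#s - 1) := by
    rw [← card_erase_of_mem hi, ← prod_const]
    refine (abs_coeff_nodal_le _ v m).trans (prod_le_prod (fun _ _ => by positivity) ?_)
    intro j hj
    linarith [hv j (mem_of_mem_erase hj)]
  rw [basis_eq_C_nodalWeight_mul_nodal_erase, coeff_C_mul, abs_mul, div_eq_mul_inv, mul_pow,
    mul_comm (2 ^ _)]
  exact mul_le_mul (abs_nodalWeight_le hδ hsep hi) hnodal (abs_nonneg _) (by positivity)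

end Separated

theorem exists_abs_coeff_le_mul_abs_eval {ι : Type*} [DecidableEq ι] {s : Finset ι}
    (hs : s.Nonempty) {v : ι → ℝ} (hvs : Set.InjOn v s) {f : ℝ[X]} (hf : f.degree < #s)
    {m : ℕ} {B : ℝ} (hB : ∀ i ∈ s, |(Lagrange.basis s v i).coeff m| ≤ B) :
    ∃ i ∈ s, |f.coeff m| ≤ #s * B * |f.eval (v i)| := by
  obtain ⟨i₀, hi₀, hmax⟩ := s.exists_max_image (fun i => |f.eval (v i)|) hs
  refine ⟨i₀, hi₀, ?_⟩
  conv_lhs => rw [eq_interpolate hvs hf, interpolate_apply, finsetSum_coeff]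
  calc |∑ i ∈ s, (C (f.eval (v i)) * Lagrange.basis s v i).coeff m|
      ≤ ∑ i ∈ s, |f.eval (v i)| * |(Lagrange.basis s v i).coeff m| := by
        refine (abs_sum_le_sum_abs _ _).trans_eq (sum_congr rfl fun i _ => ?_)
        rw [coeff_C_mul, abs_mul]
    _ ≤ ∑ _i ∈ s, |f.eval (v i₀)| * B :=
        sum_le_sum fun i hi => mul_le_mul (hmax i hi) (hB i hi) (abs_nonneg _) (abs_nonneg _)
    _ = #s * B * |f.eval (v i₀)| := by rw [sum_const, nsmul_eq_mul]; ring

theorem exists_abs_coeff_le_mul_abs_eval_div {k : ℕ} (hk : 1 ≤ k) {f : ℝ[X]}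
    (hf : f.degree ≤ k) (m : ℕ) :
    ∃ j ≤ k, |f.coeff m| ≤ (k + 1) * (2 * k) ^ k * |f.eval ((j : ℝ) / k)| := by
  have hk0 : (0 : ℝ) < k := by exact_mod_cast hk
  have hinj : Set.InjOn (fun j : ℕ => (j : ℝ) / k) (range (k + 1)) := fun i _ j _ hij => by
    simpa [div_left_inj' hk0.ne'] using hij
  have hsep : ∀ i ∈ range (k + 1), ∀ j ∈ range (k + 1), i ≠ j →
      (k : ℝ)⁻¹ ≤ |(i : ℝ) / k - (j : ℝ) / k| := fun i _ j _ hij => by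
    have h1 : (1 : ℤ) ≤ |(i : ℤ) - j| := Int.one_le_abs (by omega)
    replace h1 : (1 : ℝ) ≤ |(i : ℝ) - j| := by exact_mod_cast h1
    rw [← sub_div, abs_div, abs_of_pos hk0, inv_eq_one_div]
    gcongr
  have hv : ∀ j ∈ range (k + 1), |(j : ℝ) / k| ≤ 1 := fun j hj => by
    rw [abs_of_nonneg (by positivity), div_le_one hk0]
    exact_mod_cast Nat.lt_succ_iff.mp (mem_range.mp hj)
  have hdeg : f.degree < #(range (k + 1)) := by
    rw [card_range]; exact hf.trans_lt (by exact_mod_cast k.lt_succ_self)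
  obtain ⟨j, hj, hbound⟩ := exists_abs_coeff_le_mul_abs_eval
    (nonempty_range_iff.mpr k.succ_ne_zero) hinj hdeg
    fun i hi => abs_coeff_basis_le (inv_pos.mpr hk0) hsep hv hi m
  refine ⟨j, Nat.lt_succ_iff.mp (mem_range.mp hj), ?_⟩
  simpa [div_inv_eq_mul] using hbound

theorem succ_mul_two_mul_pow_self_le (k : ℕ) : (k + 1) * (2 * k) ^ k ≤ 2 ^ (3 * k ^ 2) := by
  calc (k + 1) * (2 * k) ^ k ≤ 2 ^ k * (2 * 2 ^ k) ^ k := by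
        gcongr
        exacts [k.lt_two_pow_self, k.lt_two_pow_self.le]
    _ = 2 ^ (k + (k + 1) * k) := by rw [← pow_succ', ← pow_mul, ← pow_add]
    _ ≤ 2 ^ (3 * k ^ 2) := Nat.pow_le_pow_right two_pos (by nlinarith)

/-- the Vandermonde polynomial claim (Claim `vandermonde`). -/
theorem stmt7 (k : ℕ) (hk : 1 ≤ k) (a₀ a₁ : ℝ) (p : Polynomial ℝ)
    (hp : 2 + p.degree ≤ (k : WithBot ℕ)) :
    ∃ j : ℕ, j ≤ k ∧
      |a₀ + a₁ * ((j : ℝ) / k) + ((j : ℝ) / k) ^ 2 * p.eval ((j : ℝ) / k)|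
        ≥ |a₁| / 2 ^ (3 * k ^ 2) := by
  set f : ℝ[X] := C a₀ + C a₁ * X + X ^ 2 * p
  have hdeg : f.degree ≤ (k : WithBot ℕ) := by
    have h1 : (1 : WithBot ℕ) ≤ k := by exact_mod_cast hk
    have hlin : (C a₀ + C a₁ * X).degree ≤ (k : WithBot ℕ) := (degree_add_le _ _).trans
      (max_le (degree_C_le.trans (zero_le_one.trans h1)) ((degree_C_mul_X_le a₁).trans h1))
    refine (degree_add_le _ _).trans (max_le hlin ?_)
    rwa [degree_mul, degree_X_pow]
  have hcoeff : f.coeff 1 = a₁ := by simp [f, mul_comm (X ^ 2) p, coeff_mul_X_pow']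
  obtain ⟨j, hjk, hj⟩ := exists_abs_coeff_le_mul_abs_eval_div hk hdeg 1
  refine ⟨j, hjk, ?_⟩
  have hconst : ((k + 1) * (2 * k) ^ k : ℝ) ≤ 2 ^ (3 * k ^ 2) := by
    exact_mod_cast succ_mul_two_mul_pow_self_le k
  have heval : f.eval ((j : ℝ) / k) =
      a₀ + a₁ * ((j : ℝ) / k) + ((j : ℝ) / k) ^ 2 * p.eval ((j : ℝ) / k) := by simp [f]
  rw [ge_iff_le, div_le_iff₀ (by positivity), ← heval, ← hcoeff, mul_comm]
  exact hj.trans (by gcongr)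

end GraphDisc
end

section
/- Let k ≥ 1 and let V be the (k+1)×(k+1) real Vandermonde matrix with entries V_{i,j} = ((i−1)/k)^{j−1} for 1 ≤ i, j ≤ k+1. Then for every vector a ∈ ℝ^{k+1}, ‖V a‖₂ ≥ 2^{−2k²} · ‖a‖₂; that is, the smallest singular value of V is at least 2^{−2k²}. -/
open scoped BigOperators

/-!
Since `adj V * V = det V • 1` and every entry of `adj V` is the determinant of a matrix with
entries in `[-1, 1]`, hence at most `(k + 1)!` in absolute value, Cauchy–Schwarz gives `det V * ‖a‖ ≤ (k + 1) * (k + 1)! * ‖V a‖`.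
At the nodes `i / k` the determinant is `sf k / k ^ (k (k + 1) / 2)`, and an induction on `k`,
driven by `(1 + 1/k) ^ k ≤ 3`, shows `(k + 1) * (k + 1)! * k ^ (k (k + 1) / 2) ≤ 4 ^ k² * sf k`.
-/

namespace Matrix

open Finset Nat

section

variable {m n : Type*} [Fintype m] [Fintype n]

theorem sum_sq_mulVec_le (N : Matrix m n ℝ) {B : ℝ} (hN : ∀ i j, |N i j| ≤ B) (x : n → ℝ) :
    ∑ i, (N *ᵥ x) i ^ 2 ≤ Fintype.card m * Fintype.card n * B ^ 2 * ∑ j, x j ^ 2 := by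
  have hrow : ∀ i, ∑ j, N i j ^ 2 ≤ Fintype.card n * B ^ 2 := fun i => by
    calc ∑ j, N i j ^ 2 ≤ ∑ _j : n, B ^ 2 :=
          sum_le_sum fun j _ => sq_le_sq' (abs_le.mp (hN i j)).1 (abs_le.mp (hN i j)).2
      _ = Fintype.card n * B ^ 2 := by simp
  calc ∑ i, (N *ᵥ x) i ^ 2 ≤ ∑ _i : m, Fintype.card n * B ^ 2 * ∑ j, x j ^ 2 :=
        sum_le_sum fun i _ => (sum_mul_sq_le_sq_mul_sq _ _ _).trans
          (mul_le_mul_of_nonneg_right (hrow i) (sum_nonneg fun j _ => sq_nonneg _))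
    _ = Fintype.card m * Fintype.card n * B ^ 2 * ∑ j, x j ^ 2 := by simp [mul_assoc]

variable [DecidableEq n]

theorem abs_adjugate_apply_le (A : Matrix n n ℝ) (hA : ∀ i j, |A i j| ≤ 1) (i j : n) :
    |A.adjugate i j| ≤ (Fintype.card n)! := by
  rw [adjugate_apply]
  have hentries : ∀ i' j', |A.updateRow j (Pi.single i 1) i' j'| ≤ 1 := fun i' j' => by
    rcases eq_or_ne i' j with rfl | h
    · rw [updateRow_self, Pi.single_apply]
      split_ifs <;> simp
    · rw [updateRow_ne h]
      exact hA i' j'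
  simpa using det_le (abv := AbsoluteValue.abs) hentries

theorem abs_det_mul_sqrt_sum_sq_le (A : Matrix n n ℝ) (hA : ∀ i j, |A i j| ≤ 1) (a : n → ℝ) :
    |A.det| * √(∑ i, a i ^ 2) ≤
      Fintype.card n * (Fintype.card n)! * √(∑ i, (A *ᵥ a) i ^ 2) := by
  have hadj : A.adjugate *ᵥ (A *ᵥ a) = A.det • a := by
    rw [mulVec_mulVec, adjugate_mul, smul_mulVec, one_mulVec]
  have hsq := sum_sq_mulVec_le A.adjugate (abs_adjugate_apply_le A hA) (A *ᵥ a)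
  simp only [hadj, Pi.smul_apply, smul_eq_mul, mul_pow, ← mul_sum] at hsq
  calc |A.det| * √(∑ i, a i ^ 2) = √(A.det ^ 2 * ∑ i, a i ^ 2) := by
        rw [Real.sqrt_mul (sq_nonneg _), Real.sqrt_sq_eq_abs]
    _ ≤ √((Fintype.card n * (Fintype.card n)! : ℝ) ^ 2 * ∑ i, (A *ᵥ a) i ^ 2) :=
        Real.sqrt_le_sqrt (by linarith)
    _ = Fintype.card n * (Fintype.card n)! * √(∑ i, (A *ᵥ a) i ^ 2) := by
        rw [Real.sqrt_mul (sq_nonneg _), Real.sqrt_sq (by positivity)]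

end

theorem det_vandermonde_const_mul {R : Type*} [CommRing R] {n : ℕ} (c : R) (v : Fin n → R) :
    (vandermonde fun i => c * v i).det = c ^ (∑ i ∈ range n, i) * (vandermonde v).det := by
  have h : (vandermonde fun i => c * v i) =
      vandermonde v * diagonal fun j : Fin n => c ^ (j : ℕ) := by
    ext i j
    simp [vandermonde_apply, mul_pow, mul_comm]
  rw [h, det_mul, det_diagonal, prod_pow_eq_pow_sum, Fin.sum_univ_eq_sum_range (·) n, mul_comm]

theorem det_vandermonde_div_natCast (k : ℕ) :
    (vandermonde fun i : Fin (k + 1) => ((i : ℕ) : ℝ) / k).det =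
      (sf k : ℝ) / (k : ℝ) ^ (∑ i ∈ range (k + 1), i) := by
  simp_rw [div_eq_inv_mul]
  rw [det_vandermonde_const_mul, det_vandermonde_id_eq_superFactorial, inv_pow]

end Matrix

namespace Nat

theorem add_one_pow_le_three_mul_pow (k : ℕ) : (k + 1) ^ k ≤ 3 * k ^ k := by
  rcases k.eq_zero_or_pos with rfl | hk
  · simp
  have he : (1 + (k : ℝ)⁻¹) ^ k ≤ 3 :=
    Real.one_add_inv_pow_le_exp.trans (by linarith [Real.exp_one_lt_d9])
  have hsplit : ((k : ℝ) + 1) ^ k = (1 + (k : ℝ)⁻¹) ^ k * (k : ℝ) ^ k := by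
    rw [← mul_pow]
    field_simp
  exact_mod_cast hsplit ▸ mul_le_mul_of_nonneg_right he (by positivity)

theorem add_one_pow_le_three_pow_mul_factorial (k : ℕ) : (k + 1) ^ k ≤ 3 ^ k * k ! := by
  induction k with
  | zero => simp
  | succ k ih =>
    calc (k + 1 + 1) ^ (k + 1) ≤ 3 * (k + 1) ^ (k + 1) := add_one_pow_le_three_mul_pow _
      _ = 3 * (k + 1) * (k + 1) ^ k := by ring
      _ ≤ 3 * (k + 1) * (3 ^ k * k !) := by gcongr
      _ = 3 ^ (k + 1) * (k + 1)! := by rw [factorial_succ]; ring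

theorem three_mul_pow_le (k : ℕ) (hk : 1 ≤ k) :
    3 * 27 ^ k * (k + 2) ^ 4 ≤ 16 * 256 ^ k * (k + 1) ^ 2 := by
  have h3 : k + 2 ≤ 3 ^ k := by
    induction k, hk using Nat.le_induction with
    | base => norm_num
    | succ k hk ih => rw [pow_succ]; omega
  calc 3 * 27 ^ k * (k + 2) ^ 4 = 3 * 27 ^ k * (k + 2) ^ 2 * (k + 2) ^ 2 := by ring
    _ ≤ 3 * 27 ^ k * (3 ^ k) ^ 2 * (2 * (k + 1)) ^ 2 := by gcongr; omega
    _ = 12 * 243 ^ k * (k + 1) ^ 2 := by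
        rw [show (243 : ℕ) = 27 * 3 ^ 2 by norm_num, mul_pow _ (3 ^ 2), ← pow_mul, ← pow_mul,
          mul_comm 2 k]
        ring
    _ ≤ 16 * 256 ^ k * (k + 1) ^ 2 := by gcongr <;> norm_num

theorem sq_mul_pow_le_superFactorial (k : ℕ) (hk : 1 ≤ k) :
    ((k + 1) * (k + 1)!) ^ 2 * k ^ (k * (k + 1)) ≤ 16 ^ k ^ 2 * (sf k) ^ 2 := by
  induction k, hk using Nat.le_induction with
  | base => simp
  | succ k hk ih =>
    have hpow : (k + 1) ^ ((k + 1) * (k + 1 + 1)) =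
        ((k + 1) ^ k) ^ (k + 1) * ((k + 1) * (k + 1) ^ k) ^ 2 := by
      rw [← pow_succ', ← pow_mul, ← pow_mul, ← pow_add]
      congr 1
      rw [succ_eq_add_one]
      ring
    have h27 : 27 ^ k = 3 ^ k * (3 ^ k) ^ 2 := by
      rw [← pow_succ', ← pow_mul, mul_comm, pow_mul]
      norm_num
    calc ((k + 1 + 1) * (k + 1 + 1)!) ^ 2 * (k + 1) ^ ((k + 1) * (k + 1 + 1))
        ≤ ((k + 2) * ((k + 2) * (k + 1)!)) ^ 2 *
            ((3 * k ^ k) ^ (k + 1) * ((k + 1) * (3 ^ k * k !)) ^ 2) := by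
          rw [hpow, factorial_succ (k + 1)]
          gcongr
          · exact add_one_pow_le_three_mul_pow k
          · exact add_one_pow_le_three_pow_mul_factorial k
      _ = ((k + 1) * (k + 1)!) ^ 2 * k ^ (k * (k + 1)) * (3 * 27 ^ k * (k + 2) ^ 4 * k ! ^ 2) := by
          rw [h27, mul_pow 3 (k ^ k), ← pow_mul, factorial_succ k]
          ring
      _ ≤ 16 ^ k ^ 2 * (sf k) ^ 2 * (16 * 256 ^ k * (k + 1) ^ 2 * k ! ^ 2) := by
          gcongr ?_ * (?_ * _)
          exact three_mul_pow_le k hk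
      _ = 16 ^ (k + 1) ^ 2 * (sf (k + 1)) ^ 2 := by
          rw [superFactorial_succ, factorial_succ, show (256 : ℕ) = 16 ^ 2 by norm_num, ← pow_mul]
          ring

theorem add_one_mul_factorial_mul_pow_le (k : ℕ) (hk : 1 ≤ k) :
    (k + 1) * (k + 1)! * k ^ (∑ i ∈ Finset.range (k + 1), i) ≤ 4 ^ k ^ 2 * sf k := by
  have hsum : (∑ i ∈ Finset.range (k + 1), i) * 2 = k * (k + 1) := by
    rw [Finset.sum_range_id_mul_two, Nat.add_sub_cancel, mul_comm]
  refine (Nat.pow_le_pow_iff_left two_ne_zero).mp ?_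
  calc ((k + 1) * (k + 1)! * k ^ (∑ i ∈ Finset.range (k + 1), i)) ^ 2
      = ((k + 1) * (k + 1)!) ^ 2 * k ^ (k * (k + 1)) := by rw [mul_pow, ← pow_mul, hsum]
    _ ≤ 16 ^ k ^ 2 * (sf k) ^ 2 := sq_mul_pow_le_superFactorial k hk
    _ = (4 ^ k ^ 2 * sf k) ^ 2 := by rw [mul_pow, ← pow_mul, mul_comm (k ^ 2), pow_mul]; norm_num

end Nat

namespace GraphDisc

/-- lower bound on the smallest singular value of the Vandermonde matrix
at the nodes `0, 1/k, …, 1`. -/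
theorem stmt8 (k : ℕ) (hk : 1 ≤ k) (a : Fin (k + 1) → ℝ) :
    Real.sqrt (∑ i, (Matrix.mulVec
        (Matrix.of fun i j : Fin (k + 1) => ((i : ℕ) / (k : ℝ)) ^ (j : ℕ)) a i) ^ 2)
      ≥ ((2 : ℝ) ^ (2 * k ^ 2))⁻¹ * Real.sqrt (∑ i, (a i) ^ 2) := by
  set V := Matrix.vandermonde fun i : Fin (k + 1) => ((i : ℕ) : ℝ) / k
  change (2 ^ (2 * k ^ 2) : ℝ)⁻¹ * √(∑ i, a i ^ 2) ≤ √(∑ i, (V.mulVec a) i ^ 2)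
  have hentries : ∀ i j, |V i j| ≤ 1 := fun i j => by
    have h0 : (0 : ℝ) ≤ (i : ℕ) / k := by positivity
    change |(((i : ℕ) : ℝ) / k) ^ (j : ℕ)| ≤ 1
    rw [abs_of_nonneg (pow_nonneg h0 _)]
    exact pow_le_one₀ h0 (div_le_one_of_le₀ (by exact_mod_cast i.is_le) k.cast_nonneg)
  have hdet : ((k : ℝ) + 1) * (k + 1).factorial ≤ 4 ^ k ^ 2 * V.det := by
    rw [Matrix.det_vandermonde_div_natCast, mul_div_assoc', le_div_iff₀ (by positivity)]
    exact_mod_cast Nat.add_one_mul_factorial_mul_pow_le k hk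
  have hdet_pos : 0 < V.det :=
    pos_of_mul_pos_right ((show (0 : ℝ) < (k + 1) * (k + 1).factorial by positivity).trans_le hdet)
      (by positivity)
  have hbound := Matrix.abs_det_mul_sqrt_sum_sq_le V hentries a
  rw [Fintype.card_fin, abs_of_pos hdet_pos, Nat.cast_add_one] at hbound
  rw [pow_mul, show (2 : ℝ) ^ 2 = 4 by norm_num, inv_mul_le_iff₀ (by positivity)]
  refine le_of_mul_le_mul_left ?_ hdet_pos
  calc V.det * √(∑ i, a i ^ 2)
      ≤ (k + 1) * (k + 1).factorial * √(∑ i, (V.mulVec a) i ^ 2) := hbound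
    _ ≤ 4 ^ k ^ 2 * V.det * √(∑ i, (V.mulVec a) i ^ 2) := by gcongr
    _ = V.det * (4 ^ k ^ 2 * √(∑ i, (V.mulVec a) i ^ 2)) := by ring

end GraphDisc
end

section
/- Let V be a countably infinite set and let D be a family of Boolean functions d : V → {0,1} with finite VC dimension ρ. Then for every ε > 0 there exist two finitely supported probability distributions q₁ and q₂ on V with disjoint supports such that IPM_D(q₁,q₂) < ε. -/
/-!
Fix `n` distinct points of `V`. By the Sauer–Shelah lemma, `D` cuts out only polynomially many
subsets of them, so a Chernoff bound and a union bound give a red/blue colouring of the points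
whose discrepancy is at most `δ n` on each of these subsets and on the whole set, once `n` is
large. The uniform distributions on the red and on the blue points then have disjoint supports,
and every `d ∈ D` gives them masses differing by at most `8 δ`.
-/

open scoped BigOperators

namespace GraphDisc

open Finset Real

section Discrepancy

variable {ι : Type*}

def disc (s : Finset ι) (χ : ι → Bool) : ℝ :=
  ∑ i ∈ s, if χ i then 1 else -1

lemma disc_eq_card_sub_card (s : Finset ι) (χ : ι → Bool) :
    disc s χ = #(s.filter (χ · = true)) - #(s.filter (χ · = false)) := by
  simp only [disc, Finset.sum_ite, sum_const, nsmul_eq_mul, mul_one, mul_neg, sub_eq_add_neg,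
    Bool.not_eq_true]

variable [Fintype ι] [DecidableEq ι]

lemma sum_exp_mul_disc_le (s : Finset ι) (l : ℝ) :
    ∑ χ : ι → Bool, exp (l * disc s χ) ≤ (2 * exp (l ^ 2 / 2)) ^ Fintype.card ι := by
  let g (i : ι) (b : Bool) : ℝ := if i ∈ s then exp (l * if b then 1 else -1) else 1
  have hprod (χ : ι → Bool) : exp (l * disc s χ) = ∏ i, g i (χ i) := by
    simp only [g, disc, mul_sum, exp_sum, prod_ite_mem, univ_inter]
  have hfactor (i : ι) : ∑ b, g i b ≤ 2 * exp (l ^ 2 / 2) := by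
    by_cases hi : i ∈ s
    · have := cosh_le_exp_half_sq l
      rw [cosh_eq] at this
      simp only [g, hi, Fintype.sum_bool, if_true, Bool.false_eq_true, if_false, mul_one,
        mul_neg]
      linarith
    · simp only [g, hi, Fintype.sum_bool, if_false]
      linarith [one_le_exp (by positivity : 0 ≤ l ^ 2 / 2)]
  calc ∑ χ : ι → Bool, exp (l * disc s χ) = ∏ i, ∑ b, g i b := by
        simp only [hprod, Fintype.prod_sum]
    _ ≤ ∏ _i : ι, 2 * exp (l ^ 2 / 2) :=
        prod_le_prod (fun i _ => sum_nonneg fun b _ => by positivity) fun i _ => hfactor i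
    _ = _ := by rw [prod_const, card_univ]

/-- Chernoff's bound, counting colourings instead of measuring them. -/
lemma card_lt_mul_disc_le (s : Finset ι) (l a : ℝ) :
    (#{χ : ι → Bool | a < l * disc s χ} : ℝ)
      ≤ 2 ^ Fintype.card ι * exp (Fintype.card ι * (l ^ 2 / 2) - a) := by
  have hmarkov : (#{χ : ι → Bool | a < l * disc s χ} : ℝ) * exp a
      ≤ ∑ χ : ι → Bool, exp (l * disc s χ) := by
    calc (#{χ : ι → Bool | a < l * disc s χ} : ℝ) * exp a
        = ∑ χ ∈ {χ : ι → Bool | a < l * disc s χ}, exp a := by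
          rw [sum_const, nsmul_eq_mul]
      _ ≤ ∑ χ ∈ {χ : ι → Bool | a < l * disc s χ}, exp (l * disc s χ) :=
          sum_le_sum fun χ hχ => exp_le_exp.2 (mem_filter.1 hχ).2.le
      _ ≤ ∑ χ : ι → Bool, exp (l * disc s χ) :=
          sum_le_sum_of_subset_of_nonneg (subset_univ _) fun _ _ _ => (exp_pos _).le
  rw [sub_eq_add_neg, exp_add, exp_neg, ← mul_assoc, exp_nat_mul, ← mul_pow,
    ← div_eq_mul_inv, le_div_iff₀ (exp_pos a)]
  exact hmarkov.trans (sum_exp_mul_disc_le s l)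

lemma card_lt_abs_disc_le (s : Finset ι) {δ : ℝ} (hδ : 0 < δ) :
    (#{χ : ι → Bool | δ * Fintype.card ι < |disc s χ|} : ℝ)
      ≤ 2 * (2 ^ Fintype.card ι * exp (-(Fintype.card ι * (δ ^ 2 / 2)))) := by
  set n : ℝ := (Fintype.card ι : ℝ)
  have hsplit : ({χ : ι → Bool | δ * n < |disc s χ|} : Finset _)
      ⊆ ({χ | δ ^ 2 * n < δ * disc s χ} : Finset _)
        ∪ ({χ | δ ^ 2 * n < -δ * disc s χ} : Finset _) := by
    intro χ hχ
    simp only [mem_filter, mem_univ, true_and, mem_union] at hχ ⊢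
    rcases lt_abs.1 hχ with h | h
    · left; linarith [mul_lt_mul_of_pos_left h hδ]
    · right; linarith [mul_lt_mul_of_pos_left h hδ]
  have hexp (l : ℝ) (hl : l ^ 2 = δ ^ 2) :
      n * (l ^ 2 / 2) - δ ^ 2 * n = -(n * (δ ^ 2 / 2)) := by rw [hl]; ring
  calc (#{χ : ι → Bool | δ * n < |disc s χ|} : ℝ)
      ≤ #{χ : ι → Bool | δ ^ 2 * n < δ * disc s χ}
        + #{χ : ι → Bool | δ ^ 2 * n < -δ * disc s χ} := by
        exact_mod_cast (card_le_card hsplit).trans (card_union_le _ _)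
    _ ≤ 2 ^ Fintype.card ι * exp (n * (δ ^ 2 / 2) - δ ^ 2 * n)
        + 2 ^ Fintype.card ι * exp (n * ((-δ) ^ 2 / 2) - δ ^ 2 * n) :=
        add_le_add (card_lt_mul_disc_le s δ _) (card_lt_mul_disc_le s (-δ) _)
    _ = _ := by rw [hexp δ rfl, hexp (-δ) (neg_sq δ)]; ring

lemma exists_forall_abs_disc_le (F : Finset (Finset ι)) {δ : ℝ} (hδ : 0 < δ)
    (hF : #F * (2 * exp (-(Fintype.card ι * (δ ^ 2 / 2)))) < 1) :
    ∃ χ : ι → Bool, ∀ s ∈ F, |disc s χ| ≤ δ * Fintype.card ι := by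
  by_contra! hbad
  have hcover : (univ : Finset (ι → Bool))
      ⊆ F.biUnion fun s => {χ | δ * Fintype.card ι < |disc s χ|} := by
    intro χ _
    obtain ⟨s, hs, hχ⟩ := hbad χ
    exact mem_biUnion.2 ⟨s, hs, mem_filter.2 ⟨mem_univ _, hχ⟩⟩
  have hcount : (2 : ℝ) ^ Fintype.card ι
      ≤ #F * (2 * (2 ^ Fintype.card ι * exp (-(Fintype.card ι * (δ ^ 2 / 2))))) := by
    calc (2 : ℝ) ^ Fintype.card ι = #(univ : Finset (ι → Bool)) := by simp
      _ ≤ ∑ s ∈ F, (#{χ : ι → Bool | δ * Fintype.card ι < |disc s χ|} : ℝ) := by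
          exact_mod_cast (card_le_card hcover).trans card_biUnion_le
      _ ≤ ∑ _s ∈ F, 2 * (2 ^ Fintype.card ι * exp (-(Fintype.card ι * (δ ^ 2 / 2)))) :=
          sum_le_sum fun s _ => card_lt_abs_disc_le s hδ
      _ = _ := by rw [sum_const, nsmul_eq_mul]
  have h2n : (0 : ℝ) < 2 ^ Fintype.card ι := by positivity
  nlinarith

end Discrepancy

lemma _root_.Finset.card_le_of_vcDim_le {α : Type*} [Fintype α] [DecidableEq α]
    {𝒜 : Finset (Finset α)} {ρ : ℕ} (h : 𝒜.vcDim ≤ ρ) :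
    #𝒜 ≤ (ρ + 1) * (Fintype.card α + 1) ^ ρ := by
  calc #𝒜 ≤ #𝒜.shatterer := card_le_card_shatterer 𝒜
    _ ≤ ∑ k ∈ Iic 𝒜.vcDim, (Fintype.card α).choose k := card_shatterer_le_sum_vcDim
    _ ≤ ∑ k ∈ Iic ρ, (Fintype.card α).choose k :=
        sum_le_sum_of_subset (Iic_subset_Iic.2 h)
    _ ≤ ∑ _k ∈ Iic ρ, (Fintype.card α + 1) ^ ρ := sum_le_sum fun k hk =>
        calc (Fintype.card α).choose k ≤ Fintype.card α ^ k := Nat.choose_le_pow _ _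
          _ ≤ (Fintype.card α + 1) ^ k := Nat.pow_le_pow_left (Nat.le_succ _) k
          _ ≤ (Fintype.card α + 1) ^ ρ := Nat.pow_le_pow_right (Nat.succ_pos _) (mem_Iic.1 hk)
    _ = (ρ + 1) * (Fintype.card α + 1) ^ ρ := by rw [sum_const, Nat.card_Iic, smul_eq_mul]

section Trace

variable {V ι : Type*}

lemma Shatters.card_le_vcDim {D : Set (V → Bool)} {T : Finset V} (h : Shatters D T) :
    (#T : ℕ∞) ≤ vcDim D :=
  le_iSup₂ (f := fun T (_ : T ∈ {T | Shatters D T}) => (#T : ℕ∞)) T h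

variable [Fintype ι]

open Classical in
noncomputable def traceOn (D : Set (V → Bool)) (S : ι ↪ V) : Finset (Finset ι) :=
  {s | ∃ d ∈ D, ({i | d (S i) = true} : Finset ι) = s}

lemma mem_traceOn {D : Set (V → Bool)} (S : ι ↪ V) {d : V → Bool} (hd : d ∈ D) :
    ({i | d (S i) = true} : Finset ι) ∈ traceOn D S := by
  simp only [traceOn, mem_filter, mem_univ, true_and]
  exact ⟨d, hd, rfl⟩

lemma vcDim_traceOn_le [DecidableEq ι] {D : Set (V → Bool)} {ρ : ℕ} (hD : vcDim D ≤ ρ)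
    (S : ι ↪ V) : (traceOn D S).vcDim ≤ ρ := by
  refine Finset.sup_le fun s hs => ?_
  suffices Shatters D (s.map S) by
    have := this.card_le_vcDim.trans hD
    rwa [card_map, Nat.cast_le] at this
  intro φ
  obtain ⟨u, hu, hsu⟩ := (mem_shatterer.1 hs) (filter_subset (fun i => φ (S i) = true) s)
  simp only [traceOn, mem_filter, mem_univ, true_and] at hu
  obtain ⟨d, hd, rfl⟩ := hu
  refine ⟨d, hd, fun x hx => ?_⟩
  obtain ⟨i, hi, rfl⟩ := mem_map.1 hx
  have := congrArg (i ∈ ·) hsu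
  simp only [mem_inter, mem_filter, mem_univ, true_and, hi] at this
  exact Bool.eq_iff_iff.2 (eq_iff_iff.1 this)

end Trace

section Uniform

variable {V : Type*} {A : Finset V} {v : V}

noncomputable def unifOn (A : Finset V) : V → ℝ :=
  (A : Set V).indicator fun _ => (#A : ℝ)⁻¹

lemma unifOn_of_mem (hv : v ∈ A) : unifOn A v = (#A : ℝ)⁻¹ :=
  Set.indicator_of_mem (mem_coe.2 hv) _

lemma unifOn_of_notMem (hv : v ∉ A) : unifOn A v = 0 :=
  Set.indicator_of_notMem (mem_coe.not.2 hv) _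

lemma support_unifOn_subset (A : Finset V) : Function.support (unifOn A) ⊆ A :=
  Set.support_indicator_subset

lemma isDist_unifOn (hA : A.Nonempty) : IsDist (unifOn A) := by
  refine ⟨Set.indicator_nonneg fun _ _ => by positivity, ?_⟩
  have h : HasSum (unifOn A) (∑ v ∈ A, unifOn A v) :=
    hasSum_sum_of_ne_finset_zero fun v hv => unifOn_of_notMem hv
  rwa [sum_congr rfl fun v hv => unifOn_of_mem hv, sum_const, nsmul_eq_mul,
    mul_inv_cancel₀ (by exact_mod_cast hA.card_pos.ne')] at h

lemma LP1_unifOn (A : Finset V) (d : V → Bool) :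
    LP1 (unifOn A) d = #(A.filter (d · = true)) / #A := by
  calc LP1 (unifOn A) d = ∑ v ∈ A, (#A : ℝ)⁻¹ * if d v then 1 else 0 := by
        rw [LP1, tsum_eq_sum fun v hv => by rw [unifOn_of_notMem hv, zero_mul]]
        exact sum_congr rfl fun v hv => by rw [unifOn_of_mem hv]
    _ = _ := by rw [← mul_sum, sum_boole, div_eq_inv_mul]

end Uniform

lemma card_insert_univ_traceOn_le {V ι : Type*} [Fintype ι] [DecidableEq ι]
    {D : Set (V → Bool)} {ρ : ℕ} (hD : vcDim D ≤ ρ) (S : ι ↪ V) :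
    (#(insert univ (traceOn D S)) : ℝ) ≤ (ρ + 2) * (Fintype.card ι + 1) ^ ρ := by
  have htrace : (#(traceOn D S) : ℝ) ≤ (ρ + 1) * (Fintype.card ι + 1) ^ ρ := by
    exact_mod_cast card_le_of_vcDim_le (vcDim_traceOn_le hD S)
  have hone : (1 : ℝ) ≤ (Fintype.card ι + 1) ^ ρ := one_le_pow₀ (by linarith)
  calc (#(insert univ (traceOn D S)) : ℝ) ≤ #(traceOn D S) + 1 := by
        exact_mod_cast card_insert_le _ _
    _ ≤ _ := by linarith

lemma eventually_mul_pow_mul_exp_neg_lt_one (C : ℝ) (k : ℕ) {c : ℝ} (hc : 0 < c) :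
    ∀ᶠ n : ℕ in Filter.atTop, C * ((n : ℝ) + 1) ^ k * exp (-(n * c)) < 1 := by
  have hr : |exp (-c)| < 1 := by rw [abs_of_pos (exp_pos _), exp_lt_one_iff]; linarith
  have h := ((tendsto_pow_const_mul_const_pow_of_abs_lt_one k hr).comp
    (Filter.tendsto_add_atTop_nat 1)).const_mul (C * exp c)
  rw [mul_zero] at h
  refine (h.eventually (gt_mem_nhds one_pos)).mono fun n hn => ?_
  refine lt_of_eq_of_lt ?_ hn
  rw [Function.comp_apply, ← exp_nat_mul, Nat.cast_add_one, mul_assoc, mul_assoc,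
    mul_left_comm (exp c), ← exp_add]
  ring_nf

lemma abs_div_sub_div_le {P Q a b t : ℝ} (ha : 0 < a) (hb : 0 < b) (hP : 0 ≤ P) (hPa : P ≤ a)
    (hPQ : |P - Q| ≤ t) (hab : |a - b| ≤ t) : |P / a - Q / b| ≤ 2 * t / b := by
  have hPa' : |P / a| ≤ 1 := by
    rw [abs_of_nonneg (div_nonneg hP ha.le)]; exact div_le_one_of_le₀ hPa ha.le
  have hba : |(b - a) / b| ≤ t / b := by
    rw [abs_div, abs_of_pos hb, abs_sub_comm]; gcongr
  have hPQ' : |(P - Q) / b| ≤ t / b := by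
    rw [abs_div, abs_of_pos hb]; gcongr
  calc |P / a - Q / b| = |P / a * ((b - a) / b) + (P - Q) / b| := by
        congr 1; field_simp; ring
    _ ≤ |P / a| * |(b - a) / b| + |(P - Q) / b| := by rw [← abs_mul]; exact abs_add_le _ _
    _ ≤ 1 * (t / b) + t / b := by gcongr
    _ = 2 * t / b := by ring

lemma IPM1_le {V : Type*} {D : Set (V → Bool)} {p q : V → ℝ} {C : ℝ} (hC : 0 ≤ C)
    (h : ∀ d ∈ D, |LP1 p d - LP1 q d| ≤ C) : IPM1 D p q ≤ C :=
  Real.iSup_le (fun d => Real.iSup_le (h d) hC) hC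

section Coloring

variable {V ι : Type*} [Fintype ι] (S : ι ↪ V) (χ : ι → Bool)

def colorClass (b : Bool) : Finset V := ({i | χ i = b} : Finset ι).map S

lemma disjoint_colorClass : Disjoint (colorClass S χ true) (colorClass S χ false) := by
  rw [colorClass, colorClass, disjoint_map]
  exact disjoint_filter.2 fun i _ h => by simp [h]

lemma card_colorClass_add :
    #(colorClass S χ true) + #(colorClass S χ false) = Fintype.card ι := by
  rw [colorClass, colorClass, card_map, card_map, ← card_univ]
  simpa using card_filter_add_card_filter_not (s := univ) (χ · = true)

lemma card_filter_colorClass_sub (d : V → Bool) :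
    (#((colorClass S χ true).filter (d · = true)) : ℝ)
      - #((colorClass S χ false).filter (d · = true)) = disc {i | d (S i) = true} χ := by
  simp only [disc_eq_card_sub_card, colorClass, filter_map, card_map, filter_filter,
    Function.comp_apply, and_comm]

lemma card_colorClass_sub :
    (#(colorClass S χ true) : ℝ) - #(colorClass S χ false) = disc univ χ := by
  simpa using card_filter_colorClass_sub S χ fun _ => true

lemma exists_isDist_of_forall_abs_disc_le {D : Set (V → Bool)} {δ : ℝ}
    (hι : 0 < Fintype.card ι) (hδ : δ ≤ 1 / 2)
    (hbal : |disc univ χ| ≤ δ * Fintype.card ι)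
    (hD : ∀ d ∈ D, |disc {i | d (S i) = true} χ| ≤ δ * Fintype.card ι) :
    ∃ q₁ q₂ : V → ℝ, IsDist q₁ ∧ IsDist q₂ ∧
      (Function.support q₁).Finite ∧ (Function.support q₂).Finite ∧
      Disjoint (Function.support q₁) (Function.support q₂) ∧ IPM1 D q₁ q₂ ≤ 8 * δ := by
  set A := colorClass S χ true
  set B := colorClass S χ false
  set n : ℝ := (Fintype.card ι : ℝ)
  have hn : 0 < n := Nat.cast_pos.2 hι
  have hδ0 : 0 ≤ δ := nonneg_of_mul_nonneg_left ((abs_nonneg _).trans hbal) hn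
  have hsum : (#A : ℝ) + #B = n := by
    simp only [A, B, n]; exact_mod_cast card_colorClass_add S χ
  have hdiff : |(#A : ℝ) - #B| ≤ δ * n := card_colorClass_sub S χ ▸ hbal
  have hδn : δ * n ≤ n / 2 := by nlinarith
  have hA : n / 4 ≤ #A := by linarith [abs_le.1 hdiff]
  have hB : n / 4 ≤ #B := by linarith [abs_le.1 hdiff]
  have hA₀ : A.Nonempty := card_pos.1 (by exact_mod_cast (by linarith : (0 : ℝ) < #A))
  have hB₀ : B.Nonempty := card_pos.1 (by exact_mod_cast (by linarith : (0 : ℝ) < #B))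
  refine ⟨unifOn A, unifOn B, isDist_unifOn hA₀, isDist_unifOn hB₀,
    A.finite_toSet.subset (support_unifOn_subset A),
    B.finite_toSet.subset (support_unifOn_subset B),
    Set.disjoint_of_subset (support_unifOn_subset A) (support_unifOn_subset B)
      (disjoint_coe.2 (disjoint_colorClass S χ)), IPM1_le (by positivity) fun d hd => ?_⟩
  rw [LP1_unifOn, LP1_unifOn]
  calc _ ≤ 2 * (δ * n) / #B := abs_div_sub_div_le (by linarith) (by linarith) (by positivity)
        (by exact_mod_cast card_filter_le _ _) (card_filter_colorClass_sub S χ d ▸ hD d hd) hdiff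
    _ ≤ 2 * (δ * n) / (n / 4) := div_le_div_of_nonneg_left (by positivity) (by positivity) hB
    _ = 8 * δ := by field_simp; ring

end Coloring

theorem stmt10_general (V : Type) [Infinite V]
    (D : Set (V → Bool)) (ρ : ℕ) (hD : vcDim D = (ρ : ℕ∞))
    (ε : ℝ) (hε : 0 < ε) :
    ∃ q₁ q₂ : V → ℝ, IsDist q₁ ∧ IsDist q₂ ∧
      (Function.support q₁).Finite ∧ (Function.support q₂).Finite ∧
      Disjoint (Function.support q₁) (Function.support q₂) ∧
      IPM1 D q₁ q₂ < ε := by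
  set δ := min (ε / 16) (1 / 2)
  have hδ : 0 < δ := lt_min (by positivity) (by norm_num)
  obtain ⟨n, hsmall, hn⟩ := ((eventually_mul_pow_mul_exp_neg_lt_one (2 * (ρ + 2)) ρ
    (by positivity : 0 < δ ^ 2 / 2)).and (Filter.eventually_ge_atTop 1)).exists
  let S : Fin n ↪ V := Fin.valEmbedding.trans (Infinite.natEmbedding V)
  let F := insert univ (traceOn D S)
  have hunion : #F * (2 * exp (-(Fintype.card (Fin n) * (δ ^ 2 / 2)))) < 1 := by
    calc _ ≤ (ρ + 2) * ((n : ℝ) + 1) ^ ρ * (2 * exp (-(n * (δ ^ 2 / 2)))) := by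
          simpa using mul_le_mul_of_nonneg_right (card_insert_univ_traceOn_le hD.le S)
            (by positivity : (0 : ℝ) ≤ 2 * exp (-(n * (δ ^ 2 / 2))))
      _ < 1 := by linarith
  obtain ⟨χ, hχ⟩ := exists_forall_abs_disc_le F hδ hunion
  obtain ⟨q₁, q₂, h₁, h₂, hfin₁, hfin₂, hdisj, hIPM⟩ :=
    exists_isDist_of_forall_abs_disc_le S χ (by rwa [Fintype.card_fin]) (min_le_right _ _)
      (hχ _ (mem_insert_self _ _)) fun d hd => hχ _ (mem_insert_of_mem (mem_traceOn S hd))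
  have h8δ : 8 * δ < ε := by linarith [min_le_left (ε / 16) (1 / 2)]
  exact ⟨q₁, q₂, h₁, h₂, hfin₁, hfin₂, hdisj, hIPM.trans_lt h8δ⟩

/-- indistinguishable distributions with disjoint supports
(Claim `disjoint`). -/
theorem stmt10 (V : Type) [Countable V] [Infinite V]
    (D : Set (V → Bool)) (ρ : ℕ) (hD : vcDim D = (ρ : ℕ∞))
    (ε : ℝ) (hε : 0 < ε) :
    ∃ q₁ q₂ : V → ℝ, IsDist q₁ ∧ IsDist q₂ ∧
      (Function.support q₁).Finite ∧ (Function.support q₂).Finite ∧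
      Disjoint (Function.support q₁) (Function.support q₂) ∧
      IPM1 D q₁ q₂ < ε :=
  stmt10_general V D ρ hD ε hε

end GraphDisc
end

section
/- There exists an absolute constant c > 0 such that the following holds. Let S be a finite set and let D be a family of Boolean functions on S containing the two constant functions, with VC dimension ρ ≥ 1, and let ε ∈ (0,1/8). If |S| > c·(ρ/ε²)·log²(ρ/ε²), then there exist two probability distributions q₁ and q₂ supported on S with disjoint supports such that IPM_D(q₁,q₂) < ε. -/
open scoped BigOperators

namespace GraphDisc

/-!
Split `V` into `S` and `Sᶜ` at random. For each `d ∈ D`, the number of points of `d` in `S` minus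
the number in `Sᶜ` is a Rademacher sum, so by Hoeffding's bound (proved by counting splittings
against `exp (t * X)`) it exceeds `Δ = ε n / 16` for at most a `2 exp (-Δ² / 2n)` fraction of the
splittings. By Sauer–Shelah `2 |D| ≤ n ^ (4ρ)`, and the size condition on `n` makes the union
bound smaller than `1`, so some `S` balances every `d ∈ D`, the constant `true` included. The
uniform distributions on `S` and `Sᶜ` then have disjoint supports and their expectations of every
`d ∈ D` differ by at most `2Δ / |S| ≤ ε / 2`.
-/

open Finset Real

section Discrepancy

variable {V : Type*} [Fintype V] [DecidableEq V]

def signedSum (S : Finset V) (a : V → ℝ) : ℝ := ∑ v ∈ S, a v - ∑ v ∈ Sᶜ, a v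

lemma signedSum_one (S : Finset V) : signedSum S (fun _ => 1) = #S - #Sᶜ := by
  simp [signedSum]

lemma exp_mul_signedSum (t : ℝ) (S : Finset V) (a : V → ℝ) :
    exp (t * signedSum S a) = (∏ v ∈ S, exp (t * a v)) * ∏ v ∈ Sᶜ, exp (-(t * a v)) := by
  rw [signedSum, mul_sub, sub_eq_add_neg, exp_add, mul_sum, mul_sum, exp_sum, ← sum_neg_distrib,
    exp_sum]

lemma sum_exp_mul_signedSum_le {a : V → ℝ} (ha : ∀ v, |a v| ≤ 1) (t : ℝ) :
    ∑ S : Finset V, exp (t * signedSum S a) ≤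
      2 ^ Fintype.card V * exp (Fintype.card V * t ^ 2 / 2) := by
  have hfactor : ∀ v, exp (t * a v) + exp (-(t * a v)) ≤ 2 * exp (t ^ 2 / 2) := by
    intro v
    have hcosh := cosh_le_exp_half_sq (t * a v)
    have hsq : (t * a v) ^ 2 ≤ t ^ 2 := by
      rw [mul_pow, ← sq_abs (a v)]
      exact mul_le_of_le_one_right (sq_nonneg t) (pow_le_one₀ (abs_nonneg _) (ha v))
    rw [cosh_eq] at hcosh
    linarith [exp_le_exp.2 (div_le_div_of_nonneg_right hsq (zero_le_two (α := ℝ)))]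
  calc ∑ S : Finset V, exp (t * signedSum S a)
      = ∏ v, (exp (t * a v) + exp (-(t * a v))) := by
        simp only [prod_add, powerset_univ, exp_mul_signedSum, compl_eq_univ_sdiff]
    _ ≤ ∏ _v : V, 2 * exp (t ^ 2 / 2) :=
        prod_le_prod (fun _ _ => by positivity) fun v _ => hfactor v
    _ = 2 ^ Fintype.card V * exp (Fintype.card V * t ^ 2 / 2) := by
        rw [prod_const, card_univ, mul_pow, ← exp_nat_mul, mul_div_assoc]

lemma card_lt_abs_signedSum_le {a : V → ℝ} (ha : ∀ v, |a v| ≤ 1) {Δ : ℝ} (hΔ : 0 < Δ)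
    (hV : 0 < Fintype.card V) :
    (#{S : Finset V | Δ < |signedSum S a|} : ℝ) ≤
      2 * 2 ^ Fintype.card V * exp (-Δ ^ 2 / (2 * Fintype.card V)) := by
  set n : ℝ := (Fintype.card V : ℝ)
  have hn : 0 < n := by positivity
  set t := Δ / n
  have ht : 0 < t := by positivity
  have hbad : ∀ S : Finset V, Δ < |signedSum S a| →
      exp (t * Δ) ≤ exp (t * signedSum S a) + exp (-t * signedSum S a) := by
    intro S hS
    rcases lt_abs.1 hS with h | h
    · linarith [exp_le_exp.2 (mul_le_mul_of_nonneg_left h.le ht.le), exp_pos (-t * signedSum S a)]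
    · have : t * Δ ≤ -t * signedSum S a := by nlinarith
      linarith [exp_le_exp.2 this, exp_pos (t * signedSum S a)]
  have hsum : (#{S : Finset V | Δ < |signedSum S a|} : ℝ) * exp (t * Δ) ≤
      2 * 2 ^ Fintype.card V * exp (n * t ^ 2 / 2) :=
    calc (#{S : Finset V | Δ < |signedSum S a|} : ℝ) * exp (t * Δ)
        = ∑ S ∈ {S : Finset V | Δ < |signedSum S a|}, exp (t * Δ) := by
          rw [sum_const, nsmul_eq_mul]
      _ ≤ ∑ S ∈ {S : Finset V | Δ < |signedSum S a|},
            (exp (t * signedSum S a) + exp (-t * signedSum S a)) :=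
          sum_le_sum fun S hS => hbad S (mem_filter.1 hS).2
      _ ≤ ∑ S : Finset V, (exp (t * signedSum S a) + exp (-t * signedSum S a)) :=
          sum_le_sum_of_subset_of_nonneg (filter_subset _ _) fun _ _ _ => by positivity
      _ ≤ 2 * 2 ^ Fintype.card V * exp (n * t ^ 2 / 2) := by
          rw [sum_add_distrib]
          have h₁ := sum_exp_mul_signedSum_le ha t
          have h₂ := sum_exp_mul_signedSum_le ha (-t)
          rw [neg_sq] at h₂
          linarith
  have hexp : n * t ^ 2 / 2 + -(t * Δ) = -Δ ^ 2 / (2 * n) := by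
    simp only [t]; field_simp; ring
  calc (#{S : Finset V | Δ < |signedSum S a|} : ℝ)
      = #{S : Finset V | Δ < |signedSum S a|} * exp (t * Δ) * exp (-(t * Δ)) := by
        rw [mul_assoc, ← exp_add, add_neg_cancel, exp_zero, mul_one]
    _ ≤ 2 * 2 ^ Fintype.card V * exp (n * t ^ 2 / 2) * exp (-(t * Δ)) := by gcongr
    _ = 2 * 2 ^ Fintype.card V * exp (-Δ ^ 2 / (2 * n)) := by
        rw [mul_assoc, ← exp_add, hexp]

lemma exists_forall_abs_signedSum_le {ι : Type*} (s : Finset ι) (a : ι → V → ℝ)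
    (ha : ∀ i ∈ s, ∀ v, |a i v| ≤ 1) {Δ : ℝ} (hΔ : 0 < Δ) (hV : 0 < Fintype.card V)
    (hs : #s * (2 * exp (-Δ ^ 2 / (2 * Fintype.card V))) < 1) :
    ∃ S : Finset V, ∀ i ∈ s, |signedSum S (a i)| ≤ Δ := by
  by_contra! hbad
  have hcover : (univ : Finset (Finset V)) ⊆
      s.biUnion fun i => {S : Finset V | Δ < |signedSum S (a i)|} := fun S _ => by
    obtain ⟨i, hi, hS⟩ := hbad S
    exact mem_biUnion.2 ⟨i, hi, mem_filter.2 ⟨mem_univ _, hS⟩⟩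
  have hpow : (0 : ℝ) < 2 ^ Fintype.card V := by positivity
  have hcount : (2 : ℝ) ^ Fintype.card V ≤
      #s * (2 * 2 ^ Fintype.card V * exp (-Δ ^ 2 / (2 * Fintype.card V))) :=
    calc (2 : ℝ) ^ Fintype.card V = #(univ : Finset (Finset V)) := by simp
      _ ≤ ∑ i ∈ s, (#{S : Finset V | Δ < |signedSum S (a i)|} : ℝ) := by
          exact_mod_cast (card_le_card hcover).trans card_biUnion_le
      _ ≤ ∑ i ∈ s, 2 * 2 ^ Fintype.card V * exp (-Δ ^ 2 / (2 * Fintype.card V)) :=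
          sum_le_sum fun i hi => card_lt_abs_signedSum_le (ha i hi) hΔ hV
      _ = _ := by rw [sum_const, nsmul_eq_mul]
  nlinarith

end Discrepancy

lemma ncard_le_of_vcDim_le {V : Type*} [Fintype V] {D : Set (V → Bool)} {ρ : ℕ}
    (hD : vcDim D ≤ ρ) : D.ncard ≤ (ρ + 1) * (Fintype.card V + 1) ^ ρ := by
  classical
  set 𝒜 : Finset (Finset V) := {s | (fun v => decide (v ∈ s)) ∈ D}
  have hD𝒜 : D ⊆ (fun (s : Finset V) v => decide (v ∈ s)) '' 𝒜 := fun d hd =>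
    ⟨({v | d v} : Finset V), by simpa [𝒜] using hd, by ext; simp⟩
  have hvc : 𝒜.vcDim ≤ ρ := Finset.sup_le fun T hT => by
    have hshatters : Shatters D T := fun f => by
      obtain ⟨u, hu, hTu⟩ := (mem_shatterer.1 hT) (filter_subset (fun x => f x) T)
      refine ⟨_, (mem_filter.1 hu).2, fun x hx => ?_⟩
      have := congrArg (x ∈ ·) hTu
      simp only [mem_inter, mem_filter, hx, true_and, eq_iff_iff] at this
      rwa [Bool.eq_iff_iff, decide_eq_true_iff]
    exact_mod_cast (le_iSup₂ (f := fun (T : Finset V) (_ : Shatters D T) => (#T : ℕ∞))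
      T hshatters).trans hD
  calc D.ncard ≤ #𝒜 := (Set.ncard_le_ncard hD𝒜 (Set.toFinite _)).trans
        (Set.ncard_image_le (Set.toFinite _)) |>.trans (Set.ncard_coe_finset 𝒜).le
    _ ≤ #𝒜.shatterer := card_le_card_shatterer 𝒜
    _ ≤ ∑ k ∈ Iic 𝒜.vcDim, (Fintype.card V).choose k := card_shatterer_le_sum_vcDim
    _ ≤ ∑ _k ∈ Iic ρ, (Fintype.card V + 1) ^ ρ := by
        refine sum_le_sum_of_subset_of_nonneg (Iic_subset_Iic.2 hvc) (fun _ _ _ => Nat.zero_le _)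
          |>.trans (sum_le_sum fun k hk => ?_)
        calc (Fintype.card V).choose k ≤ Fintype.card V ^ k := Nat.choose_le_pow _ _
          _ ≤ (Fintype.card V + 1) ^ k := Nat.pow_le_pow_left (Nat.le_succ _) k
          _ ≤ (Fintype.card V + 1) ^ ρ := Nat.pow_le_pow_right (Nat.succ_pos _) (mem_Iic.1 hk)
    _ = (ρ + 1) * (Fintype.card V + 1) ^ ρ := by rw [sum_const, Nat.card_Iic, smul_eq_mul]

lemma two_mul_succ_mul_succ_pow_le {n ρ : ℕ} (hn : 2 ≤ n) (hρ : 1 ≤ ρ) :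
    2 * ((ρ + 1) * (n + 1) ^ ρ) ≤ n ^ (4 * ρ) := by
  have h₁ : 2 * (ρ + 1) ≤ (n ^ 2) ^ ρ :=
    calc 2 * (ρ + 1) ≤ 2 * 2 ^ ρ := Nat.mul_le_mul_left 2 (Nat.lt_two_pow_self)
      _ ≤ 4 ^ ρ := by
          obtain ⟨k, rfl⟩ := Nat.exists_eq_add_of_le' hρ
          rw [pow_succ, pow_succ, show 4 = 2 * 2 from rfl, mul_pow]
          nlinarith [Nat.one_le_two_pow (n := k)]
      _ ≤ (n ^ 2) ^ ρ := Nat.pow_le_pow_left (by nlinarith) ρ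
  have h₂ : (n + 1) ^ ρ ≤ (n ^ 2) ^ ρ := Nat.pow_le_pow_left (by nlinarith) ρ
  calc 2 * ((ρ + 1) * (n + 1) ^ ρ) = 2 * (ρ + 1) * (n + 1) ^ ρ := by ring
    _ ≤ (n ^ 2) ^ ρ * (n ^ 2) ^ ρ := Nat.mul_le_mul h₁ h₂
    _ = n ^ (4 * ρ) := by ring

lemma four_lt_log {x : ℝ} (hx : 64 < x) : 4 < log x :=
  calc (4 : ℝ) < 6 * log 2 := by linarith [log_two_gt_d9]
    _ = log 64 := by rw [show (64 : ℝ) = 2 ^ 6 by norm_num, log_pow]; norm_num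
    _ ≤ log x := log_le_log (by norm_num) hx.le

lemma mul_log_lt_self {x y : ℝ} (hx : 64 < x) (hy : 4000 * x * log x ^ 2 < y) :
    2048 * x * log y < y := by
  have hlogx := four_lt_log hx
  have hy₀ : 0 < y := by nlinarith
  have hlogy : log y ≤ y / (4096 * x) + 12 * log 2 + log x :=
    calc log y = log (y / (4096 * x)) + log (2 ^ 12) + log x := by
          rw [← log_mul (by positivity) (by positivity), ← log_mul (by positivity) (by positivity)]
          congr 1; field_simp; norm_num
      _ ≤ y / (4096 * x) + 12 * log 2 + log x := by
          have hz : 0 ≤ y / (4096 * x) := by positivity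
          rw [log_pow]; push_cast; linarith [Real.log_le_self hz]
  have hdiv : 2048 * x * (y / (4096 * x)) = y / 2 := by field_simp; ring
  nlinarith [mul_le_mul_of_nonneg_left hlogy (by positivity : (0 : ℝ) ≤ 2048 * x),
    log_two_lt_d9, mul_pos (by positivity : (0 : ℝ) < x) (by linarith : (0 : ℝ) < log x - 4)]

lemma exists_finset_forall_abs_signedSum_le {V : Type*} [Fintype V] [DecidableEq V]
    {D : Set (V → Bool)} {ρ : ℕ} (hD : vcDim D ≤ ρ) (hρ : 1 ≤ ρ) (hV : 2 ≤ Fintype.card V)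
    {Δ : ℝ} (hΔ : 0 < Δ) (h : 4 * ρ * log (Fintype.card V) < Δ ^ 2 / (2 * Fintype.card V)) :
    ∃ S : Finset V, ∀ d ∈ D, |signedSum S (fun v => if d v then 1 else 0)| ≤ Δ := by
  set n : ℝ := (Fintype.card V : ℝ) with hn_def
  have hcard : 2 * (D.ncard : ℝ) ≤ exp (4 * ρ * log n) := by
    rw [show 4 * (ρ : ℝ) * log n = log (n ^ (4 * ρ)) by rw [log_pow]; push_cast; ring,
      exp_log (by positivity), hn_def]
    exact_mod_cast (Nat.mul_le_mul_left 2 (ncard_le_of_vcDim_le hD)).trans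
      (two_mul_succ_mul_succ_pow_le hV hρ)
  have hunion : #(Set.toFinite D).toFinset * (2 * exp (-Δ ^ 2 / (2 * n))) < 1 :=
    calc #(Set.toFinite D).toFinset * (2 * exp (-Δ ^ 2 / (2 * n)))
        = 2 * (D.ncard : ℝ) * exp (-Δ ^ 2 / (2 * n)) := by
          rw [Set.ncard_eq_toFinset_card D]; ring
      _ < exp (Δ ^ 2 / (2 * n)) * exp (-Δ ^ 2 / (2 * n)) := by
          gcongr; exact hcard.trans_lt (exp_lt_exp.2 h)
      _ = 1 := by rw [← exp_add, neg_div, add_neg_cancel, exp_zero]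
  obtain ⟨S, hS⟩ := exists_forall_abs_signedSum_le _ (fun d v => if d v then (1 : ℝ) else 0)
    (fun d _ v => by split_ifs <;> norm_num) hΔ (by omega) hunion
  exact ⟨S, fun d hd => hS d (by simpa using hd)⟩

section UniformOn

variable {V : Type*} [Fintype V] [DecidableEq V]

noncomputable def uniformOn (S : Finset V) : V → ℝ := fun v => if v ∈ S then (#S : ℝ)⁻¹ else 0

lemma isDist_uniformOn {S : Finset V} (hS : S.Nonempty) : IsDist (uniformOn S) := by
  refine ⟨fun v => by unfold uniformOn; positivity, ?_⟩
  convert hasSum_fintype (uniformOn S)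
  simp only [uniformOn]
  rw [sum_ite_mem, univ_inter, sum_const, nsmul_eq_mul,
    mul_inv_cancel₀ (by exact_mod_cast hS.card_pos.ne')]

lemma disjoint_support_uniformOn_compl (S : Finset V) :
    Disjoint (Function.support (uniformOn S)) (Function.support (uniformOn Sᶜ)) := by
  rw [Set.disjoint_left]
  intro v h₁ h₂
  by_cases hv : v ∈ S <;> simp_all [uniformOn]

lemma LP1_uniformOn (S : Finset V) (d : V → Bool) :
    LP1 (uniformOn S) d = (∑ v ∈ S, if d v then 1 else 0) / #S := by
  simp only [LP1, tsum_fintype, uniformOn, ite_mul, zero_mul]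
  rw [sum_ite_mem, univ_inter, sum_div]
  exact sum_congr rfl fun v _ => inv_mul_eq_div _ _

end UniformOn

lemma abs_div_sub_div_le_s15 {α β p q Δ : ℝ} (hp : 0 < p) (hq : 0 < q) (hβ : 0 ≤ β) (hβq : β ≤ q)
    (hαβ : |α - β| ≤ Δ) (hpq : |p - q| ≤ Δ) : |α / p - β / q| ≤ 2 * Δ / p := by
  have hβq' : β / q ≤ 1 := (div_le_one hq).2 hβq
  calc |α / p - β / q| = |(α - β) + β / q * (q - p)| / p := by
        rw [← abs_of_pos hp, ← abs_div, abs_of_pos hp]; congr 1; field_simp; ring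
    _ ≤ (|α - β| + β / q * |q - p|) / p := by
        gcongr
        exact (abs_add_le _ _).trans_eq (by rw [abs_mul, abs_of_nonneg (div_nonneg hβ hq.le)])
    _ ≤ 2 * Δ / p := by
        gcongr
        rw [abs_sub_comm] at hpq
        nlinarith [abs_nonneg (q - p), div_nonneg hβ hq.le]

lemma IPM1_uniformOn_compl_le {V : Type*} [Fintype V] [DecidableEq V] (D : Set (V → Bool))
    {S : Finset V} (hS : S.Nonempty) (hSc : Sᶜ.Nonempty) {Δ : ℝ} (hΔ : 0 ≤ Δ)
    (hbal : |(#S : ℝ) - #Sᶜ| ≤ Δ)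
    (hD : ∀ d ∈ D, |signedSum S (fun v => if d v then 1 else 0)| ≤ Δ) :
    IPM1 D (uniformOn S) (uniformOn Sᶜ) ≤ 2 * Δ / #S := by
  refine Real.iSup_le (fun d => Real.iSup_le (fun hd => ?_) (by positivity)) (by positivity)
  rw [LP1_uniformOn, LP1_uniformOn]
  refine abs_div_sub_div_le_s15 (by exact_mod_cast hS.card_pos) (by exact_mod_cast hSc.card_pos)
    (sum_nonneg fun _ _ => by split_ifs <;> norm_num) ?_ (hD d hd) hbal
  exact (sum_le_card_nsmul _ _ 1 fun _ _ => by split_ifs <;> norm_num).trans_eq (by simp)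

/-- disjointly supported indistinguishable distributions over a large enough
finite domain (Lemma `disjoint_improved`). -/
theorem stmt15 :
    ∃ c : ℝ, 0 < c ∧
      ∀ (V : Type) [Fintype V] (D : Set (V → Bool)),
        (fun _ => false) ∈ D → (fun _ => true) ∈ D →
        ∀ ρ : ℕ, 1 ≤ ρ → vcDim D = (ρ : ℕ∞) →
        ∀ ε : ℝ, 0 < ε → ε < 1 / 8 →
        (Fintype.card V : ℝ) > c * ((ρ : ℝ) / ε ^ 2) * (Real.log ((ρ : ℝ) / ε ^ 2)) ^ 2 →
        ∃ q₁ q₂ : V → ℝ, IsDist q₁ ∧ IsDist q₂ ∧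
          Disjoint (Function.support q₁) (Function.support q₂) ∧
          IPM1 D q₁ q₂ < ε := by
  classical
  refine ⟨4000, by norm_num, fun V _ D _ htrue ρ hρ hvc ε hε hε8 hV => ?_⟩
  set n : ℝ := (Fintype.card V : ℝ) with hn_def
  have hx : 64 < (ρ : ℝ) / ε ^ 2 := by
    rw [lt_div_iff₀ (by positivity)]; nlinarith [(Nat.one_le_cast (α := ℝ)).2 hρ]
  have hn : (2 : ℝ) ≤ n := by nlinarith [four_lt_log hx]
  set Δ := ε * n / 16 with hΔ_def
  have hlogn : 4 * ρ * log n < Δ ^ 2 / (2 * n) :=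
    calc 4 * ρ * log n = ε ^ 2 / 512 * (2048 * (ρ / ε ^ 2) * log n) := by field_simp; ring
      _ < ε ^ 2 / 512 * n := by gcongr; exact mul_log_lt_self hx hV
      _ = Δ ^ 2 / (2 * n) := by field_simp; ring
  obtain ⟨S, hS⟩ := exists_finset_forall_abs_signedSum_le hvc.le hρ
    (by rw [hn_def] at hn; exact_mod_cast hn) (by positivity) hlogn
  have hbal : |(#S : ℝ) - #Sᶜ| ≤ Δ := by simpa [signedSum_one] using hS _ htrue
  have hsum : (#S : ℝ) + #Sᶜ = n := by rw [hn_def]; exact_mod_cast card_add_card_compl S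
  have hΔn : Δ ≤ n / 2 := by rw [hΔ_def]; nlinarith
  have hSn : n / 4 ≤ #S := by rw [abs_le] at hbal; linarith
  have hScn : n / 4 ≤ #Sᶜ := by rw [abs_le] at hbal; linarith
  have hS₀ : S.Nonempty := card_pos.1 (by exact_mod_cast (show (0 : ℝ) < #S by linarith))
  have hSc₀ : Sᶜ.Nonempty := card_pos.1 (by exact_mod_cast (show (0 : ℝ) < #Sᶜ by linarith))
  refine ⟨uniformOn S, uniformOn Sᶜ, isDist_uniformOn hS₀, isDist_uniformOn hSc₀,
    disjoint_support_uniformOn_compl S, ?_⟩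
  calc IPM1 D (uniformOn S) (uniformOn Sᶜ) ≤ 2 * Δ / #S :=
        IPM1_uniformOn_compl_le D hS₀ hSc₀ (by positivity) hbal hS
    _ ≤ ε / 2 := by rw [div_le_iff₀ (by linarith), hΔ_def]; nlinarith
    _ < ε := by linarith

end GraphDisc
end

section
/- Let S be a finite set with |S| ≥ 2, let ε ∈ (0,1/2), let D be a family of Boolean functions on S, and set m = ⌈ln|S|/(2ε²)⌉. Let f : S → {0,1} be a Boolean function such that for every choice of d₁,…,d_m ∈ D, f is not equal to the function v ↦ 𝟙[Σ_{i=1}^m (2·d_i(v) − 1) ≥ 0]. Then there exists a probability distribution q on S such that for every d ∈ D, q({v ∈ S : d(v) ≠ f(v)}) ≥ 1/2 − ε. -/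
open scoped BigOperators

namespace GraphDisc

section Aux

variable {V : Type} [Fintype V]

open Classical in
/-- Auxiliary: pick a weak distinguisher with error `< 1/2 - ε` under normalized `w`,
if one exists. -/
noncomputable def pickD (D : Set (V → Bool)) (f : V → Bool) (ε : ℝ) (w : V → ℝ) :
    V → Bool :=
  if h : ∃ d ∈ D,
      (∑ v ∈ Finset.univ.filter (fun v => d v ≠ f v), w v / ∑ u, w u) < 1 / 2 - ε
  then h.choose else fun _ => false

/-- Auxiliary: boosting weights. -/
noncomputable def wt (D : Set (V → Bool)) (f : V → Bool) (ε β : ℝ) : ℕ → V → ℝ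
  | 0 => fun _ => (1 : ℝ)
  | t + 1 => fun v => wt D f ε β t v *
      (if pickD D f ε (wt D f ε β t) v = f v then β else 1)

end Aux

/-- existence of a distribution that is simultaneously hard for all of `D`
with respect to a target `f` outside the majority-vote class. -/
theorem stmt17 (V : Type) [Fintype V] (h2 : 2 ≤ Fintype.card V)
    (ε : ℝ) (hε : 0 < ε) (hε' : ε < 1 / 2)
    (D : Set (V → Bool)) (f : V → Bool)
    (hf : f ∉ thresholdClass D ⌈Real.log (Fintype.card V) / (2 * ε ^ 2)⌉₊) :
    ∃ q : V → ℝ, IsDist q ∧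
      ∀ d ∈ D,
        (∑ v ∈ Finset.univ.filter (fun v => d v ≠ f v), q v) ≥ 1 / 2 - ε := by
  classical
  by_contra hcon
  push_neg at hcon
  have hcon' : ∀ q : V → ℝ, IsDist q → ∃ d ∈ D,
      (∑ v ∈ Finset.univ.filter (fun v => d v ≠ f v), q v) < 1 / 2 - ε := by
    intro q hq
    obtain ⟨d, hd, hlt⟩ := hcon q hq
    exact ⟨d, hd, hlt⟩
  set n : ℕ := Fintype.card V with hn
  set m : ℕ := ⌈Real.log n / (2 * ε ^ 2)⌉₊ with hm
  set β : ℝ := (1 / 2 - ε) / (1 / 2 + ε) with hβ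
  have hhalf : (0 : ℝ) < 1 / 2 - ε := by linarith
  have hhalf' : (0 : ℝ) < 1 / 2 + ε := by linarith
  have hβ0 : 0 < β := div_pos hhalf hhalf'
  have hβ1 : β < 1 := by
    rw [hβ, div_lt_one hhalf']; linarith
  set w : ℕ → V → ℝ := wt D f ε β with hw
  have wpos : ∀ t v, 0 < w t v := by
    intro t
    induction t with
    | zero => intro v; simp [hw, wt]
    | succ t ih =>
      intro v
      show 0 < w t v * (if pickD D f ε (w t) v = f v then β else 1)
      rcases lt_or_ge 0 (if pickD D f ε (w t) v = f v then β else 1) with h | h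
      · exact mul_pos (ih v) h
      · exfalso; revert h; split <;> intro h <;> [linarith [hβ0]; linarith]
  set W : ℕ → ℝ := fun t => ∑ v, w t v with hW
  have hne : Nonempty V := by
    rw [← Fintype.card_pos_iff]; omega
  have Wpos : ∀ t, 0 < W t :=
    fun t => Finset.sum_pos (fun v _ => wpos t v) Finset.univ_nonempty
  have hdist : ∀ t, IsDist (fun v => w t v / W t) := by
    intro t
    constructor
    · intro v; exact div_nonneg (wpos t v).le (Wpos t).le
    · have : ∑ v, w t v / W t = 1 := by
        rw [← Finset.sum_div, div_self (Wpos t).ne']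
      have h := hasSum_fintype (fun v => w t v / W t)
      rwa [this] at h
  have hex : ∀ t, ∃ d ∈ D,
      (∑ v ∈ Finset.univ.filter (fun v => d v ≠ f v), w t v / ∑ u, w t u)
        < 1 / 2 - ε := by
    intro t
    obtain ⟨d, hd, hlt⟩ := hcon' (fun v => w t v / W t) (hdist t)
    exact ⟨d, hd, hlt⟩
  set d : ℕ → V → Bool := fun t => pickD D f ε (w t) with hd
  have hdspec : ∀ t, d t ∈ D ∧
      (∑ v ∈ Finset.univ.filter (fun v => d t v ≠ f v), w t v / ∑ u, w t u)
        < 1 / 2 - ε := by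
    intro t
    have : d t = (hex t).choose := by
      show pickD D f ε (w t) = _
      rw [pickD, dif_pos (hex t)]
    rw [this]
    exact (hex t).choose_spec
  -- weight recursion bound
  have hWrec : ∀ t, W (t + 1) < (1 - 2 * ε) * W t := by
    intro t
    have hA : (∑ v ∈ Finset.univ.filter (fun v => d t v ≠ f v), w t v)
        < (1 / 2 - ε) * W t := by
      have h := (hdspec t).2
      rw [← Finset.sum_div, div_lt_iff₀ (Wpos t)] at h
      exact h
    have hsplit : W (t + 1) =
        (∑ v ∈ Finset.univ.filter (fun v => d t v ≠ f v), w t v) +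
        β * (∑ v ∈ Finset.univ.filter (fun v => ¬ d t v ≠ f v), w t v) := by
      show (∑ v, w t v * (if pickD D f ε (w t) v = f v then β else 1)) = _
      rw [← Finset.sum_filter_add_sum_filter_not Finset.univ (fun v => d t v ≠ f v),
        Finset.mul_sum]
      congr 1
      · apply Finset.sum_congr rfl
        intro v hv
        simp only [Finset.mem_filter] at hv
        have : ¬ (pickD D f ε (w t) v = f v) := hv.2
        rw [if_neg this, mul_one]
      · apply Finset.sum_congr rfl
        intro v hv
        simp only [Finset.mem_filter, not_not] at hv
        have : pickD D f ε (w t) v = f v := hv.2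
        rw [if_pos this, mul_comm]
    have hBsum : (∑ v ∈ Finset.univ.filter (fun v => d t v ≠ f v), w t v) +
        (∑ v ∈ Finset.univ.filter (fun v => ¬ d t v ≠ f v), w t v) = W t :=
      Finset.sum_filter_add_sum_filter_not Finset.univ _ _
    have hβident : β * (1 / 2 + ε) = 1 / 2 - ε := by
      rw [hβ]; field_simp
    set A := ∑ v ∈ Finset.univ.filter (fun v => d t v ≠ f v), w t v with hAdef
    set B := ∑ v ∈ Finset.univ.filter (fun v => ¬ d t v ≠ f v), w t v with hBdef
    rw [hsplit]
    have hB : B = W t - A := by linarith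
    rw [hB]
    nlinarith [Wpos t, hA, hβ1, hβ0]
  have hW0 : W 0 = n := by
    show (∑ _v : V, (1 : ℝ)) = n
    simp [hn]
  have hWm : ∀ t, W (t + 1) < n * (1 - 2 * ε) ^ (t + 1) := by
    intro t
    induction t with
    | zero =>
      have := hWrec 0
      rw [hW0] at this
      calc W 1 < (1 - 2 * ε) * n := this
        _ = n * (1 - 2 * ε) ^ 1 := by ring
    | succ t ih =>
      have h1 := hWrec (t + 1)
      have h2ε : 0 < 1 - 2 * ε := by linarith
      calc W (t + 2) < (1 - 2 * ε) * W (t + 1) := h1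
        _ < (1 - 2 * ε) * (n * (1 - 2 * ε) ^ (t + 1)) := by
            exact (mul_lt_mul_iff_right₀ h2ε).mpr ih
        _ = n * (1 - 2 * ε) ^ (t + 2) := by ring
  -- m ≥ 1
  have hn2 : (2 : ℝ) ≤ n := by exact_mod_cast h2
  have hlogn : 0 < Real.log n := Real.log_pos (by linarith)
  have hm1 : 1 ≤ m := by
    rw [hm, Nat.one_le_ceil_iff]
    positivity
  -- the majority vote disagrees with f somewhere
  have hmaj : ∃ v : V, f v ≠
      decide ((0 : ℝ) ≤ ∑ i : Fin m, (2 * (if d i v then (1 : ℝ) else 0) - 1)) := by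
    by_contra hno
    push_neg at hno
    apply hf
    refine ⟨fun i : Fin m => d i, fun i => (hdspec i).1, ?_⟩
    funext v
    exact hno v
  obtain ⟨v, hv⟩ := hmaj
  -- count of correct rounds
  set c : ℕ := ∑ s ∈ Finset.range m, (if d s v = f v then 1 else 0) with hc
  have hwc : ∀ t, w t v = β ^ (∑ s ∈ Finset.range t, (if d s v = f v then 1 else 0)) := by
    intro t
    induction t with
    | zero => simp [hw, wt]
    | succ t ih =>
      show w t v * (if pickD D f ε (w t) v = f v then β else 1) = _
      rw [Finset.sum_range_succ, pow_add, ih]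
      by_cases hdt : d t v = f v
      · rw [if_pos hdt]
        have : pickD D f ε (w t) v = f v := hdt
        rw [if_pos this, pow_one]
      · rw [if_neg hdt]
        have : ¬ (pickD D f ε (w t) v = f v) := hdt
        rw [if_neg this, pow_zero, mul_one]
  have hwmv : w m v = β ^ c := hwc m
  -- 2 c ≤ m
  have h2c : 2 * c ≤ m := by
    have hsum : (∑ i : Fin m, (2 * (if d i v then (1 : ℝ) else 0) - 1)) =
        ∑ s ∈ Finset.range m, (2 * (if d s v then (1 : ℝ) else 0) - 1) :=
      Fin.sum_univ_eq_sum_range (fun s => 2 * (if d s v then (1 : ℝ) else 0) - 1) m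
    have hcR : ((c : ℝ)) = ∑ s ∈ Finset.range m, (if d s v = f v then (1 : ℝ) else 0) := by
      rw [hc]
      push_cast
      apply Finset.sum_congr rfl
      intro s _
      split <;> simp
    have hmsum : (m : ℝ) = ∑ _s ∈ Finset.range m, (1 : ℝ) := by simp
    cases hfv : f v with
    | true =>
      have hdec : ¬ ((0 : ℝ) ≤ ∑ i : Fin m, (2 * (if d i v then (1 : ℝ) else 0) - 1)) := by
        intro h
        rw [hfv, decide_eq_true h] at hv
        exact hv rfl
      rw [hsum] at hdec
      push_neg at hdec
      have hkey : (∑ s ∈ Finset.range m, (2 * (if d s v then (1 : ℝ) else 0) - 1)) =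
          2 * (c : ℝ) - m := by
        rw [hcR, Finset.mul_sum, eq_sub_iff_add_eq, hmsum, ← Finset.sum_add_distrib]
        apply Finset.sum_congr rfl
        intro s _
        rw [hfv]
        rcases Bool.eq_false_or_eq_true (d s v) with h | h <;> norm_num [h]
      rw [hkey] at hdec
      have : (2 * c : ℝ) < m := by linarith
      exact_mod_cast this.le
    | false =>
      have hdec : ((0 : ℝ) ≤ ∑ i : Fin m, (2 * (if d i v then (1 : ℝ) else 0) - 1)) := by
        by_contra h
        rw [hfv, decide_eq_false h] at hv
        exact hv rfl
      rw [hsum] at hdec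
      have hkey : (∑ s ∈ Finset.range m, (2 * (if d s v then (1 : ℝ) else 0) - 1)) =
          m - 2 * (c : ℝ) := by
        rw [hcR, Finset.mul_sum, eq_sub_iff_add_eq, hmsum, ← Finset.sum_add_distrib]
        apply Finset.sum_congr rfl
        intro s _
        rw [hfv]
        rcases Bool.eq_false_or_eq_true (d s v) with h | h <;> norm_num [h]
      rw [hkey] at hdec
      have : (2 * c : ℝ) ≤ m := by linarith
      exact_mod_cast this
  -- single weight ≤ total weight
  have hle : w m v ≤ W m :=
    Finset.single_le_sum (fun u _ => (wpos m u).le) (Finset.mem_univ v)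
  -- β ^ m ≤ (w m v)^2
  have hpow : β ^ m ≤ (w m v) ^ 2 := by
    rw [hwmv, ← pow_mul]
    exact pow_le_pow_of_le_one hβ0.le hβ1.le (by omega)
  -- W m < n (1-2ε)^m and squares
  obtain ⟨m', hm'⟩ : ∃ m', m = m' + 1 := ⟨m - 1, by omega⟩
  have hWfin : W m < n * (1 - 2 * ε) ^ m := by rw [hm']; exact hWm m'
  have hnn : (0 : ℝ) < n := by linarith
  have h2ε : (0 : ℝ) < 1 - 2 * ε := by linarith
  have hsq : (W m) ^ 2 < (n * (1 - 2 * ε) ^ m) ^ 2 := by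
    exact pow_lt_pow_left₀ hWfin (Wpos m).le (by norm_num)
  have hchain : β ^ m < (n : ℝ) ^ 2 * ((1 - 2 * ε) ^ 2) ^ m := by
    calc β ^ m ≤ (w m v) ^ 2 := hpow
      _ ≤ (W m) ^ 2 := pow_le_pow_left₀ (wpos m v).le hle 2
      _ < (n * (1 - 2 * ε) ^ m) ^ 2 := hsq
      _ = (n : ℝ) ^ 2 * ((1 - 2 * ε) ^ 2) ^ m := by rw [mul_pow, ← pow_mul, ← pow_mul, Nat.mul_comm]
  -- identity (1-2ε)^2 = (1-4ε^2) β
  have hident : (1 - 2 * ε) ^ 2 = (1 - 4 * ε ^ 2) * β := by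
    rw [hβ]
    field_simp
    ring
  have h4ε : (0 : ℝ) < 1 - 4 * ε ^ 2 := by nlinarith [hε, hε', h2ε]
  -- n^2 (1-4ε^2)^m ≤ 1
  have hfinal : (n : ℝ) ^ 2 * (1 - 4 * ε ^ 2) ^ m ≤ 1 := by
    have hexp : (1 - 4 * ε ^ 2) ≤ Real.exp (-(4 * ε ^ 2)) := by
      have := Real.add_one_le_exp (-(4 * ε ^ 2))
      linarith
    have hpow2 : (1 - 4 * ε ^ 2) ^ m ≤ Real.exp (-(4 * ε ^ 2)) ^ m :=
      pow_le_pow_left₀ h4ε.le hexp m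
    have hexppow : Real.exp (-(4 * ε ^ 2)) ^ m = Real.exp (-(4 * ε ^ 2) * m) := by
      rw [← Real.exp_nat_mul]; ring_nf
    have hmge : Real.log n / (2 * ε ^ 2) ≤ (m : ℝ) := Nat.le_ceil _
    have hlogle : Real.log n ≤ 2 * ε ^ 2 * m := by
      rw [div_le_iff₀ (by positivity)] at hmge
      linarith
    have hnexp : (n : ℝ) ^ 2 = Real.exp (2 * Real.log n) := by
      rw [two_mul, Real.exp_add, Real.exp_log hnn]
      ring
    calc (n : ℝ) ^ 2 * (1 - 4 * ε ^ 2) ^ m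
        ≤ (n : ℝ) ^ 2 * Real.exp (-(4 * ε ^ 2) * m) := by
          rw [← hexppow]
          exact mul_le_mul_of_nonneg_left hpow2 (by positivity)
      _ = Real.exp (2 * Real.log n + -(4 * ε ^ 2) * m) := by
          rw [hnexp, ← Real.exp_add]
      _ ≤ Real.exp 0 := by
          apply Real.exp_le_exp.mpr
          push_cast
          linarith [hlogle]
      _ = 1 := Real.exp_zero
  -- contradiction
  have hβm : (0 : ℝ) < β ^ m := pow_pos hβ0 m
  have : (n : ℝ) ^ 2 * ((1 - 2 * ε) ^ 2) ^ m = ((n : ℝ) ^ 2 * (1 - 4 * ε ^ 2) ^ m) * β ^ m := by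
    rw [hident, mul_pow]
    ring
  rw [this] at hchain
  have hfin2 : ((n : ℝ) ^ 2 * (1 - 4 * ε ^ 2) ^ m) * β ^ m ≤ β ^ m :=
    mul_le_of_le_one_left hβm.le hfinal
  exact lt_irrefl _ (hchain.trans_le hfin2)

end GraphDisc
end

section
/- Let V = ℕ and let G be the class of all symmetric Boolean functions g : V × V → {0,1} that are edge indicators of 1-regular simple graphs on V, i.e., g(v,v) = 0 for all v, and for every v ∈ V there is exactly one u ∈ V with g(v,u) = 1. Then: (i) gVC(G) = 1, i.e., for every v ∈ V the class G_v = {u ↦ g(v,u) : g ∈ G} of Boolean functions on V has VC dimension 1; and (ii) G, viewed as a family of Boolean functions on V × V, has infinite VC dimension: for every n there exist n pairwise-disjoint pairs (a₁,b₁),…,(a_n,b_n) of distinct vertices such that the set {(a₁,b₁),…,(a_n,b_n)} ⊆ V × V is shattered by G. -/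
/-!
A fixed-point-free involution `f` of `ℕ` is a perfect matching, and `k ↦ k ^^^ c k` is one
whenever `c` is nonzero and constant on the pairs `{k, k ^^^ c k}`. Every neighbourhood in a
perfect matching is a singleton, so `G_v` shatters no two points, while `v` can be matched with
any `u ≠ v` (take `c = v ^^^ u`), so `G_v` shatters `{v + 1}`. Deciding independently in each
block `{4i, …, 4i+3}` whether `4i` is matched with `4i+1` or with `4i+2` shatters any number of
the disjoint pairs `(4i, 4i+1)`.
-/

open scoped BigOperators

namespace GraphDisc

/-- The class of edge indicators of 1-regular simple graphs on `ℕ`. -/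
def oneRegular : Set (ℕ → ℕ → Bool) :=
  {g | (∀ x y, g x y = g y x) ∧ (∀ v, g v v = false) ∧ ∀ v, ∃! u, g v u = true}

section VCDimension

variable {X : Type*} {D : Set (X → Bool)}

lemma le_vcDim_of_shatters {T : Finset X} (hT : Shatters D T) : (T.card : ℕ∞) ≤ vcDim D :=
  le_iSup₂ (f := fun T (_ : T ∈ {T : Finset X | Shatters D T}) => (T.card : ℕ∞)) T hT

lemma vcDim_le_one (hD : ∀ d ∈ D, ∀ x y, d x = true → d y = true → x = y) : vcDim D ≤ 1 := by
  refine iSup₂_le fun T hT => ?_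
  have hcard : T.card ≤ 1 := Finset.card_le_one.mpr fun x hx y hy => by
    obtain ⟨d, hd, hdT⟩ := hT fun _ => true
    exact hD d hd x y (hdT x hx) (hdT y hy)
  exact_mod_cast hcard

lemma vcDim_eq_top (hD : ∀ n : ℕ, ∃ T : Finset X, T.card = n ∧ Shatters D T) :
    vcDim D = ⊤ :=
  ENat.eq_top_iff_forall_ge.mpr fun n => by
    obtain ⟨T, rfl, hT⟩ := hD n
    exact le_vcDim_of_shatters hT

lemma shatters_singleton {x : X} (htrue : ∃ d ∈ D, d x = true)
    (hfalse : ∃ d ∈ D, d x = false) : Shatters D {x} := by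
  intro f
  obtain ⟨d, hd, hdx⟩ : ∃ d ∈ D, d x = f x := by
    cases f x
    exacts [hfalse, htrue]
  exact ⟨d, hd, by simpa using hdx⟩

end VCDimension

lemma eq_of_mem_oneRegular {g : ℕ → ℕ → Bool} (hg : g ∈ oneRegular) {v x y : ℕ}
    (hx : g v x = true) (hy : g v y = true) : x = y :=
  (hg.2.2 v).unique hx hy

def graphOf (f : ℕ → ℕ) : ℕ → ℕ → Bool := fun x y => decide (f x = y)

lemma graphOf_mem_oneRegular {f : ℕ → ℕ} (hf : Function.Involutive f)
    (hfix : ∀ k, f k ≠ k) : graphOf f ∈ oneRegular := by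
  refine ⟨fun x y => ?_, fun v => by simp [graphOf, hfix v], fun v => ?_⟩
  · simp only [graphOf, decide_eq_decide]
    exact ⟨fun h => h ▸ hf x, fun h => h ▸ hf y⟩
  · exact ⟨f v, by simp [graphOf], fun u hu => (of_decide_eq_true hu).symm⟩

lemma xor_div_two_pow_of_lt {c : ℕ} (k : ℕ) {m : ℕ} (hc : c < 2 ^ m) :
    (k ^^^ c) / 2 ^ m = k / 2 ^ m := by
  rw [← Nat.shiftRight_eq_div_pow, Nat.shiftRight_xor_distrib, Nat.shiftRight_eq_div_pow c,
    Nat.div_eq_of_lt hc, Nat.xor_zero, Nat.shiftRight_eq_div_pow]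

lemma graphOf_xor_mem_oneRegular {c : ℕ → ℕ} (hc : ∀ k, c (k ^^^ c k) = c k)
    (hc0 : ∀ k, c k ≠ 0) : graphOf (fun k => k ^^^ c k) ∈ oneRegular := by
  refine graphOf_mem_oneRegular (fun k => ?_) (fun k h => hc0 k ?_)
  · simp only [hc, Nat.xor_assoc, Nat.xor_self, Nat.xor_zero]
  · simpa [Nat.xor_assoc] using congrArg (k ^^^ ·) h

lemma exists_mem_oneRegular_adj {v u : ℕ} (h : v ≠ u) : ∃ g ∈ oneRegular, g v u = true :=
  ⟨graphOf fun k => k ^^^ (v ^^^ u),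
    graphOf_xor_mem_oneRegular (fun _ => rfl) (fun _ => Nat.xor_ne_zero_iff.mpr h),
    by simp [graphOf]⟩

lemma vcDim_neighbourhoods_oneRegular (v : ℕ) :
    vcDim {d : ℕ → Bool | ∃ g ∈ oneRegular, d = fun u => g v u} = 1 := by
  refine le_antisymm (vcDim_le_one ?_) ?_
  · rintro _ ⟨g, hg, rfl⟩ x y hx hy
    exact eq_of_mem_oneRegular hg hx hy
  · obtain ⟨g₁, hg₁, h₁⟩ := exists_mem_oneRegular_adj (v := v) (u := v + 1) (by omega)
    obtain ⟨g₂, hg₂, h₂⟩ := exists_mem_oneRegular_adj (v := v) (u := v + 2) (by omega)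
    have h₂' : g₂ v (v + 1) = false :=
      Bool.eq_false_iff.mpr fun h => by simpa using eq_of_mem_oneRegular hg₂ h h₂
    refine le_trans ?_ (le_vcDim_of_shatters (T := {v + 1})
      (shatters_singleton ⟨_, ⟨g₁, hg₁, rfl⟩, h₁⟩ ⟨_, ⟨g₂, hg₂, rfl⟩, h₂'⟩))
    simp

/-- Within each block `{4i, …, 4i+3}` match `4i` with `4i+1` if `s i`, and with `4i+2`
otherwise. -/
def blockMatching (s : ℕ → Bool) : ℕ → ℕ → Bool :=
  graphOf fun k => k ^^^ if s (k / 4) then 1 else 2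

lemma blockMatching_mem_oneRegular (s : ℕ → Bool) : blockMatching s ∈ oneRegular := by
  refine graphOf_xor_mem_oneRegular (fun k => ?_) (fun k => by split_ifs <;> simp)
  rw [show (4 : ℕ) = 2 ^ 2 from rfl, xor_div_two_pow_of_lt k (by split_ifs <;> norm_num)]

lemma blockMatching_four_mul (s : ℕ → Bool) (i : ℕ) :
    blockMatching s (4 * i) (4 * i + 1) = s i := by
  have heven : Even (4 * i) := ⟨2 * i, by ring⟩
  rw [blockMatching, graphOf, ← Nat.xor_one_of_even heven, Nat.mul_div_cancel_left i four_pos]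
  cases s i <;> simp

lemma shatters_blockPairs (n : ℕ) :
    Shatters ((fun (g : ℕ → ℕ → Bool) (w : ℕ × ℕ) => g w.1 w.2) '' oneRegular)
      (Finset.image (fun i : Fin n => (4 * (i : ℕ), 4 * (i : ℕ) + 1)) Finset.univ) := by
  intro f
  refine ⟨_, ⟨_, blockMatching_mem_oneRegular fun i => f (4 * i, 4 * i + 1), rfl⟩, ?_⟩
  simp [blockMatching_four_mul]

/-- 1-regular graphs have graph VC dimension 1 but infinite VC dimension. -/
theorem stmt18 :
    (∀ v : ℕ, vcDim {d : ℕ → Bool | ∃ g ∈ oneRegular, d = fun u => g v u} = 1) ∧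
    vcDim ((fun (g : ℕ → ℕ → Bool) (w : ℕ × ℕ) => g w.1 w.2) '' oneRegular) = ⊤ ∧
    ∀ n : ℕ, ∃ a b : Fin n → ℕ,
      (∀ i, a i ≠ b i) ∧
      (∀ i j, i ≠ j → a i ≠ a j ∧ a i ≠ b j ∧ b i ≠ a j ∧ b i ≠ b j) ∧
      Shatters ((fun (g : ℕ → ℕ → Bool) (w : ℕ × ℕ) => g w.1 w.2) '' oneRegular)
        (Finset.image (fun i => (a i, b i)) Finset.univ) := by
  refine ⟨vcDim_neighbourhoods_oneRegular, vcDim_eq_top fun n => ⟨_, ?_, shatters_blockPairs n⟩,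
    fun n => ⟨_, _, fun i => by omega, fun i j hij => ?_, shatters_blockPairs n⟩⟩
  · rw [Finset.card_image_of_injective _ fun i j hij => Fin.ext (by simp at hij; omega)]
    simp
  · have : (i : ℕ) ≠ j := Fin.val_ne_of_ne hij
    omega

end GraphDisc
end
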